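/- arXiv:1805.03174 — 11 statements merged into one kernel-verified Lean document; each statement's English description precedes it below -/
import Mathlib

section
/- Let A be an n×n matrix over the max-plus semiring, and suppose that the permutation weight w(π,A) = Σ_{i=1}^n a_{i,π(i)} is finite for at least one permutation π of {1,...,n}. Then there exist diagonal matrices C and D (with all diagonal entries finite) such that maper(C⊗A⊗D) = 0 and every entry of C⊗A⊗D is ≤ 0. -/
/-!  Max-plus (tropical) semiring `MP = ℝ ∪ {ε}`, `ε = -∞ = ⊥`,
`a ⊕ b = max a b` and `a ⊗ b = a + b`. -/

abbrev MP := WithBot ℝ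

/-- Tropical (max-plus) matrix product: `(A ⊗ B) i j = max_k (A i k + B k j)`. -/
noncomputable def mpMul {α β γ : Type*} [Fintype β] (A : Matrix α β MP) (B : Matrix β γ MP) :
    Matrix α γ MP :=
  fun i j => Finset.univ.sup fun k => A i k + B k j

/-- Tropical matrix-vector product: `(A ⊗ x) i = max_k (A i k + x k)`. -/
noncomputable def mpMulVec {α β : Type*} [Fintype β] (A : Matrix α β MP) (x : β → MP) : α → MP :=
  fun i => Finset.univ.sup fun k => A i k + x k

/-- Diagonal matrix with finite diagonal entries `d i` and off-diagonal entries `ε`. -/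
noncomputable def mpDiag {α : Type*} [DecidableEq α] (d : α → ℝ) : Matrix α α MP :=
  fun i j => if i = j then (d i : MP) else ⊥

/-- Tropical permanent: `maper A = max_{π} Σ_i A i (π i)`. -/
noncomputable def maper {α : Type*} [Fintype α] [DecidableEq α] (A : Matrix α α MP) : MP :=
  Finset.univ.sup fun π : Equiv.Perm α => ∑ i, A i (π i)

/-- Maximum cycle mean:
`λ(A) = sup { (A i₁ i₂ + A i₂ i₃ + ⋯ + A iₖ i₁)/k : k ≥ 1, i₁,…,iₖ }` (`ε` if none finite). -/
noncomputable def mcm {α : Type*} [Fintype α] (A : Matrix α α MP) : MP :=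
  sSup {x : MP | ∃ k : ℕ, ∃ hk : 0 < k, ∃ f : Fin k → α,
    x = WithBot.map (fun w : ℝ => w / (k : ℝ))
      (∑ i : Fin k, A (f i) (f ⟨(i.1 + 1) % k, Nat.mod_lt _ hk⟩))}

/-- Tropical tensor product `A ⊠ B`: the block matrix whose `(k,l)` block is `A ⊗ B k l`;
the row index `(k, i)` denotes position `i` inside block row `k`. -/
noncomputable def mpTensor {α β γ δ : Type*} (A : Matrix α β MP) (B : Matrix γ δ MP) :
    Matrix (γ × α) (δ × β) MP :=
  fun p q => A p.2 q.2 + B p.1 q.1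

/-- Tensor product of column vectors: `(x ⊠ y) (k, i) = x i + y k`. -/
noncomputable def mpTensorVec {α γ : Type*} (x : α → MP) (y : γ → MP) : γ × α → MP :=
  fun p => x p.2 + y p.1

/-- The tropical unit matrix: `0` on the diagonal, `ε` elsewhere. -/
noncomputable def mpUnit (α : Type*) [DecidableEq α] : Matrix α α MP :=
  fun i j => if i = j then 0 else ⊥

/-- `vec X`: the columns of `X` stacked; component `(c, r)` is `X r c`. -/
def mpVec {α β : Type*} (X : Matrix α β MP) : β × α → MP := fun p => X p.2 p.1


/-! Let `π` be a permutation of maximal weight and `w i j = a i (π j) - a j (π j)`, the gain of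
rerouting row `i` to the column `π` gives to row `j`. The weight of a simple cycle of `w` is the gain
of composing `π` with that cycle, so it is `≤ 0`. Hence cutting out simple loops bounds the weights of
all walks, and the supremum `p i` of the weights of walks leaving `i` is a potential:
`w i j + p j ≤ p i`. The scalings `c i = -p i` and `d (π j) = p j - a j (π j)` then make every entry
of `C ⊗ A ⊗ D` nonpositive, with equality along `π`, so its permanent is `0`. -/

open Finset

section Walks

variable {α : Type*} (w : α → α → WithBot ℝ)

def walkWeight (g : ℕ → α) (m : ℕ) : WithBot ℝ :=
  ∑ u ∈ range m, w (g u) (g (u + 1))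

lemma walkWeight_zero (g : ℕ → α) : walkWeight w g 0 = 0 :=
  sum_range_zero _

lemma walkWeight_cons (i : α) (g : ℕ → α) (m : ℕ) :
    walkWeight w (fun u => if u = 0 then i else g (u - 1)) (m + 1) =
      w i (g 0) + walkWeight w g m := by
  simp [walkWeight, sum_range_succ', add_comm]

lemma walkWeight_eq_splice_add_loop (g : ℕ → α) {s d : ℕ} (r : ℕ) (hg : g (s + d) = g s) :
    walkWeight w g (s + d + r) =
      walkWeight w (fun u => if u < s then g u else g (u + d)) (s + r) +
        walkWeight w (fun u => g (s + u)) d := by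
  have hhead : ∀ u ∈ range s, w (if u < s then g u else g (u + d))
      (if u + 1 < s then g (u + 1) else g (u + 1 + d)) = w (g u) (g (u + 1)) := by
    intro u hu
    have hus : u < s := mem_range.mp hu
    rcases lt_or_eq_of_le (Nat.succ_le_of_lt hus) with h | h
    · simp [hus, h]
    · subst h
      simp [hg]
  simp only [walkWeight, sum_range_add, sum_congr rfl hhead]
  rw [add_right_comm]
  congr 2
  refine sum_congr rfl fun x _ => ?_
  rw [if_neg (by omega), if_neg (by omega), add_right_comm s d x, add_right_comm (s + x) 1 d]

variable [Fintype α]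

lemma exists_simple_loop (g : ℕ → α) {m : ℕ} (hm : Fintype.card α ≤ m) :
    ∃ s d, 0 < d ∧ s + d ≤ m ∧ g (s + d) = g s ∧ Set.InjOn (fun u => g (s + u)) (Set.Iio d) := by
  classical
  obtain ⟨t₁, ht₁m, hrep₁⟩ : ∃ t ≤ m, ∃ s < t, g s = g t := by
    obtain ⟨a, b, hab, heq⟩ := Fintype.exists_ne_map_eq_of_card_lt (fun u : Fin (m + 1) => g u)
      (by simpa using Nat.lt_succ_of_le hm)
    rcases lt_or_gt_of_ne (Fin.val_ne_of_ne hab) with h | h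
    · exact ⟨b, Nat.lt_succ_iff.mp b.2, a, h, heq⟩
    · exact ⟨a, Nat.lt_succ_iff.mp a.2, b, h, heq.symm⟩
  have hrep : ∃ t, ∃ s < t, g s = g t := ⟨t₁, hrep₁⟩
  -- the first repetition closes a loop whose vertices are pairwise distinct
  obtain ⟨s, hst, hgs⟩ := Nat.find_spec hrep
  have htm : Nat.find hrep ≤ m := (Nat.find_min' hrep hrep₁).trans ht₁m
  refine ⟨s, Nat.find hrep - s, by omega, by omega, by rw [Nat.add_sub_cancel' hst.le, hgs], ?_⟩
  intro a ha b hb hab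
  simp only [Set.mem_Iio] at ha hb
  by_contra hne
  rcases lt_or_gt_of_ne hne with h | h
  · exact Nat.find_min hrep (show s + b < Nat.find hrep by omega) ⟨s + a, by omega, hab⟩
  · exact Nat.find_min hrep (show s + a < Nat.find hrep by omega) ⟨s + b, by omega, hab.symm⟩

def NoPositiveCycle : Prop :=
  ∀ (g : ℕ → α) (d : ℕ), 0 < d → g d = g 0 → Set.InjOn g (Set.Iio d) → walkWeight w g d ≤ 0

variable {w}

lemma NoPositiveCycle.exists_walkWeight_le (hw : NoPositiveCycle w) :
    ∃ B : ℝ, ∀ g m, walkWeight w g m ≤ B := by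
  obtain ⟨M, hM⟩ := Finite.exists_le fun e : α × α => (w e.1 e.2).unbotD 0
  have hedge : ∀ i j, w i j ≤ (max M 0 : ℝ) := fun i j =>
    (WithBot.le_coe_unbotD _ 0).trans (WithBot.coe_le_coe.mpr ((hM (i, j)).trans (le_max_left _ _)))
  refine ⟨Fintype.card α * max M 0, fun g m => ?_⟩
  induction m using Nat.strong_induction_on generalizing g with
  | _ m ih =>
  by_cases hm : m < Fintype.card α
  · calc walkWeight w g m ≤ ∑ _u ∈ range m, ((max M 0 : ℝ) : WithBot ℝ) :=
          sum_le_sum fun u _ => hedge _ _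
      _ = ((m * max M 0 : ℝ) : WithBot ℝ) := by
          rw [sum_const, card_range, ← WithBot.coe_nsmul, nsmul_eq_mul]
      _ ≤ _ := WithBot.coe_le_coe.mpr <| by gcongr
  · -- cutting out a simple loop shortens the walk without decreasing its weight
    obtain ⟨s, d, hd, hsd, hloop, hinj⟩ := exists_simple_loop g (not_lt.mp hm)
    obtain ⟨r, rfl⟩ : ∃ r, m = s + d + r := ⟨m - (s + d), by omega⟩
    rw [walkWeight_eq_splice_add_loop w g r hloop]
    calc _ ≤ ((Fintype.card α * max M 0 : ℝ) : WithBot ℝ) + 0 :=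
          add_le_add (ih _ (by omega) _) (hw _ d hd (by simpa using hloop) hinj)
      _ = _ := add_zero _

theorem NoPositiveCycle.exists_potential (hw : NoPositiveCycle w) :
    ∃ p : α → ℝ, ∀ i j, w i j + p j ≤ p i := by
  obtain ⟨B, hB⟩ := hw.exists_walkWeight_le
  let S : α → Set ℝ := fun i => {x | ∃ g m, g 0 = i ∧ walkWeight w g m = x}
  have hne : ∀ i, (S i).Nonempty := fun i => ⟨0, fun _ => i, 0, rfl, walkWeight_zero w _⟩
  have hbdd : ∀ i, BddAbove (S i) := fun i => ⟨B, by
    rintro x ⟨g, m, -, hx⟩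
    exact WithBot.coe_le_coe.mp (hx ▸ hB g m)⟩
  refine ⟨fun i => sSup (S i), fun i j => ?_⟩
  cases hij : w i j with
  | bot => simp
  | coe r =>
    suffices sSup (S j) ≤ sSup (S i) - r by exact_mod_cast (by linarith : r + sSup (S j) ≤ sSup (S i))
    refine csSup_le (hne j) ?_
    rintro x ⟨g, m, rfl, hx⟩
    have hcons : r + x ∈ S i := ⟨_, m + 1, rfl, by rw [walkWeight_cons, hij, hx]; rfl⟩
    linarith [le_csSup (hbdd i) hcons]

lemma noPositiveCycle_of_forall_perm [DecidableEq α] (hdiag : ∀ x, w x x = 0)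
    (hperm : ∀ σ : Equiv.Perm α, ∑ x, w x (σ x) ≤ 0) : NoPositiveCycle w := by
  intro g d hd hcl hinj
  have hinj' : Set.InjOn g (range d) := by rwa [coe_range]
  set L := (List.range d).map g
  have hL : L.Nodup :=
    List.Nodup.map_on (fun a ha b hb => hinj' (by simpa using ha) (by simpa using hb)) List.nodup_range
  -- a simple loop is a cyclic permutation of its vertices, fixing every other vertex
  set σ := L.formPerm
  have hσ : ∀ u < d, σ (g u) = g (u + 1) := by
    intro u hu
    have := List.formPerm_apply_getElem L hL u (by simpa [L] using hu)
    simp only [L, List.getElem_map, List.getElem_range, List.length_map, List.length_range] at this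
    rw [this]
    rcases lt_or_eq_of_le (Nat.succ_le_of_lt hu) with h | h
    · rw [Nat.mod_eq_of_lt h]
    · rw [show u + 1 = d from h, Nat.mod_self, hcl]
  have hfix : ∀ x ∉ (range d).image g, σ x = x := fun x hx =>
    List.formPerm_apply_of_notMem (by simpa [L] using hx)
  calc walkWeight w g d = ∑ x ∈ (range d).image g, w x (σ x) := by
        rw [sum_image hinj']
        exact sum_congr rfl fun u hu => by rw [hσ u (mem_range.mp hu)]
    _ = ∑ x, w x (σ x) := sum_subset (subset_univ _) fun x _ hx => by rw [hfix x hx, hdiag]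
    _ ≤ 0 := hperm σ

end Walks

section Scaling

variable {α : Type*} [Fintype α] [DecidableEq α]

lemma mpMul_mpDiag_left {β : Type*} (c : α → ℝ) (M : Matrix α β MP) (i : α) (j : β) :
    mpMul (mpDiag c) M i j = c i + M i j := by
  simp [mpMul, mpDiag, ite_add, Finset.sup_ite, Finset.filter_eq]

lemma mpMul_mpDiag_right {β : Type*} (M : Matrix β α MP) (d : α → ℝ) (i : β) (j : α) :
    mpMul M (mpDiag d) i j = M i j + d j := by
  simp [mpMul, mpDiag, add_ite, Finset.sup_ite, Finset.filter_eq']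

lemma maper_eq_zero_of_nonpos {B : Matrix α α MP} (hle : ∀ i j, B i j ≤ 0) (π : Equiv.Perm α)
    (hπ : ∀ i, B i (π i) = 0) : maper B = 0 :=
  le_antisymm (Finset.sup_le fun σ _ => sum_nonpos fun i _ => hle i (σ i))
    (le_sup_of_le (mem_univ π) (by simp [hπ]))

theorem exists_scaling_of_forall_perm_le {A : Matrix α α MP} {π : Equiv.Perm α}
    (hopt : ∀ σ : Equiv.Perm α, ∑ i, A i (σ i) ≤ ∑ i, A i (π i)) (hfin : ∑ i, A i (π i) ≠ ⊥) :
    ∃ c d : α → ℝ, (∀ i j, (c i : MP) + A i j + d j ≤ 0) ∧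
      ∀ i, (c i : MP) + A i (π i) + d (π i) = 0 := by
  have hne : ∀ i, A i (π i) ≠ ⊥ := fun i h => hfin (WithBot.sum_eq_bot_iff.mpr ⟨i, mem_univ _, h⟩)
  set a : α → ℝ := fun i => (A i (π i)).unbot (hne i)
  have ha : ∀ i, A i (π i) = a i := fun i => (WithBot.coe_unbot _ _).symm
  let w : α → α → WithBot ℝ := fun i j => A i (π j) + ↑(-a j)
  have hdiag : ∀ j, w j j = 0 := fun j => by simp [w, ha, ← WithBot.coe_add]
  have hperm : ∀ σ : Equiv.Perm α, ∑ x, w x (σ x) ≤ 0 := fun σ => by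
    calc ∑ x, w x (σ x) = ∑ x, A x ((σ.trans π) x) + ↑(-∑ x, a x) := by
          simp only [w, sum_add_distrib, Equiv.trans_apply]
          rw [← WithBot.coe_sum, sum_neg_distrib, Equiv.sum_comp σ a]
      _ ≤ ∑ x, A x (π x) + ↑(-∑ x, a x) := add_le_add_left (hopt _) _
      _ = 0 := by simp [ha, ← WithBot.coe_sum, ← WithBot.coe_add]
  obtain ⟨p, hp⟩ := (noPositiveCycle_of_forall_perm hdiag hperm).exists_potential
  refine ⟨fun i => -p i, fun k => p (π.symm k) - a (π.symm k), fun i k => ?_, fun i => ?_⟩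
  · obtain ⟨j, rfl⟩ := π.surjective k
    have hpij : A i (π j) + ↑(-a j) + ↑(p j) ≤ ↑(p i) := hp i j
    simp only [Equiv.symm_apply_apply]
    cases h : A i (π j) using WithBot.recBotCoe with
    | bot => simp
    | coe r =>
      rw [h] at hpij
      have : r + -a j + p j ≤ p i := by exact_mod_cast hpij
      exact_mod_cast (by linarith : -p i + r + (p j - a j) ≤ 0)
  · simp only [Equiv.symm_apply_apply, ha]
    exact_mod_cast (by ring : -p i + a i + (p i - a i) = 0)

end Scaling

/-- If some permutation weight of `A` is finite, then there are diagonal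
matrices `C`, `D` with finite diagonal entries such that `maper (C ⊗ A ⊗ D) = 0` and every
entry of `C ⊗ A ⊗ D` is `≤ 0`. -/
theorem exists_diag_normalizers (n : ℕ) (A : Matrix (Fin n) (Fin n) MP)
    (h : ∃ π : Equiv.Perm (Fin n), (∑ i, A i (π i)) ≠ ⊥) :
    ∃ c d : Fin n → ℝ,
      maper (mpMul (mpDiag c) (mpMul A (mpDiag d))) = 0 ∧
      ∀ i j, mpMul (mpDiag c) (mpMul A (mpDiag d)) i j ≤ 0 := by
  obtain ⟨π₁, hπ₁⟩ := h
  obtain ⟨π, -, hπ⟩ := exists_max_image univ (fun σ : Equiv.Perm (Fin n) => ∑ i, A i (σ i))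
    ⟨π₁, mem_univ _⟩
  obtain ⟨c, d, hle, hzero⟩ := exists_scaling_of_forall_perm_le (fun σ => hπ σ (mem_univ σ))
    (ne_bot_of_le_ne_bot hπ₁ (hπ π₁ (mem_univ _)))
  have hentry : ∀ i j, mpMul (mpDiag c) (mpMul A (mpDiag d)) i j = c i + A i j + d j := by
    intro i j
    rw [mpMul_mpDiag_left, mpMul_mpDiag_right, add_assoc]
  refine ⟨c, d, maper_eq_zero_of_nonpos (fun i j => ?_) π fun i => ?_, fun i j => ?_⟩
  all_goals rw [hentry]
  exacts [hle i j, hzero i, hle i j]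
end

section
/- Let A be an n×n matrix over the max-plus semiring. If x ∈ ℝ^n (all components finite) and A⊗x = λ⊗x for some λ ∈ R̄, then λ equals the maximum cycle mean λ(A). -/
section Aux

lemma mp_sum_eq_bot {k : ℕ} (f : Fin k → MP) (i : Fin k) (hi : f i = ⊥) :
    ∑ j, f j = ⊥ := by
  classical
  rw [← Finset.sum_erase_add _ _ (Finset.mem_univ i), hi, WithBot.add_bot]

lemma fin_mk_succ_eq_add_one {k : ℕ} [NeZero k] (t : Fin k) (h : (t.1 + 1) % k < k) :
    (⟨(t.1 + 1) % k, h⟩ : Fin k) = t + 1 := by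
  apply Fin.ext
  rw [Fin.add_def, Fin.val_one']
  exact (Nat.add_mod_mod _ _ _).symm

lemma telescope_sum {k : ℕ} [NeZero k] (lam : ℝ) (y : Fin k → ℝ) :
    ∑ t : Fin k, (lam + y t - y (t + 1)) = k * lam := by
  have h2 : ∑ t : Fin k, y (t + 1) = ∑ t, y t :=
    Fintype.sum_equiv (Equiv.addRight 1) _ _ fun t => rfl
  rw [Finset.sum_sub_distrib, Finset.sum_add_distrib, h2]
  simp [mul_comm]

lemma mp_eq_coe_of_add_coe_eq_coe {a : MP} {b c : ℝ}
    (h : a + (b : MP) = (c : MP)) : a = ((c - b : ℝ) : MP) := by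
  induction a using WithBot.recBotCoe with
  | bot => simp at h
  | coe a =>
    rw [← WithBot.coe_add, WithBot.coe_inj] at h
    rw [WithBot.coe_inj]
    linarith

lemma mp_cases (a : MP) : a = ⊥ ∨ ∃ r : ℝ, a = (r : MP) := by
  induction a using WithBot.recBotCoe with
  | bot => exact Or.inl rfl
  | coe r => exact Or.inr ⟨r, rfl⟩

end Aux

/-- If `x ∈ ℝⁿ` is finite and `A ⊗ x = λ ⊗ x`, then `λ = λ(A)`,
the maximum cycle mean of `A`. -/
theorem eigenvalue_of_finite_eigenvector_eq_mcm (n : ℕ) (hn : 0 < n)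
    (A : Matrix (Fin n) (Fin n) MP) (x : Fin n → ℝ) (l : MP)
    (h : mpMulVec A (fun i => (x i : MP)) = fun i => l + (x i : MP)) :
    l = mcm A := by
  classical
  haveI : Nonempty (Fin n) := Fin.pos_iff_nonempty.mp hn
  set S : Set MP := {x : MP | ∃ k : ℕ, ∃ hk : 0 < k, ∃ f : Fin k → Fin n,
    x = WithBot.map (fun w : ℝ => w / (k : ℝ))
      (∑ i : Fin k, A (f i) (f ⟨(i.1 + 1) % k, Nat.mod_lt _ hk⟩))} with hS
  have hSne : S.Nonempty := by
    refine ⟨_, 1, one_pos, fun _ => ⟨0, hn⟩, rfl⟩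
  have hle : ∀ i k, A i k + (x k : MP) ≤ l + (x i : MP) := by
    intro i k
    have hi := congrFun h i
    simp only [mpMulVec] at hi
    rw [← hi]
    exact Finset.le_sup (f := fun k => A i k + (x k : MP)) (Finset.mem_univ k)
  have hex : ∀ i, ∃ k, A i k + (x k : MP) = l + (x i : MP) := by
    intro i
    obtain ⟨k, -, hk⟩ := Finset.exists_mem_eq_sup Finset.univ Finset.univ_nonempty
      (fun k => A i k + (x k : MP))
    refine ⟨k, ?_⟩
    have hi := congrFun h i
    simp only [mpMulVec] at hi
    rw [← hk, hi]
  have hmcm : mcm A = sSup S := rfl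
  induction l using WithBot.recBotCoe with
  | bot =>
    -- every entry of A is ⊥
    have hA : ∀ i k, A i k = ⊥ := by
      intro i k
      have h1 := hle i k
      rw [WithBot.bot_add] at h1
      have h0 : A i k + (x k : MP) = ⊥ := le_bot_iff.mp h1
      rcases WithBot.add_eq_bot.mp h0 with h' | h'
      · exact h'
      · exact absurd h' WithBot.coe_ne_bot
    rw [hmcm]
    symm
    apply le_bot_iff.mp
    apply csSup_le hSne
    rintro b ⟨k, hk, f, rfl⟩
    have hsum : (∑ i : Fin k, A (f i) (f ⟨(i.1 + 1) % k, Nat.mod_lt _ hk⟩)) = ⊥ :=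
      mp_sum_eq_bot _ ⟨0, hk⟩ (hA _ _)
    rw [hsum]
    simp
  | coe lam =>
    -- upper bound on entries
    have hle' : ∀ i j, A i j ≤ ((lam + x i - x j : ℝ) : MP) := by
      intro i j
      rcases mp_cases (A i j) with hAij | ⟨a, hAij⟩
      · rw [hAij]; exact bot_le
      · have h1 := hle i j
        rw [hAij, ← WithBot.coe_add, ← WithBot.coe_add, WithBot.coe_le_coe] at h1
        rw [hAij, WithBot.coe_le_coe]
        linarith
    -- the upper bound for S
    have hub : ∀ b ∈ S, b ≤ ((lam : ℝ) : MP) := by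
      rintro b ⟨k, hk, f, rfl⟩
      haveI : NeZero k := ⟨hk.ne'⟩
      have hsle : (∑ i : Fin k, A (f i) (f ⟨(i.1 + 1) % k, Nat.mod_lt _ hk⟩))
          ≤ ((k * lam : ℝ) : MP) := by
        calc (∑ i : Fin k, A (f i) (f ⟨(i.1 + 1) % k, Nat.mod_lt _ hk⟩))
            ≤ ∑ i : Fin k, ((lam + x (f i) - x (f (i + 1)) : ℝ) : MP) := by
              apply Finset.sum_le_sum
              intro i _
              rw [fin_mk_succ_eq_add_one]
              exact hle' _ _
          _ = ((∑ i : Fin k, (lam + x (f i) - x (f (i + 1))) : ℝ) : MP) :=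
              (WithBot.coe_sum _ _).symm
          _ = ((k * lam : ℝ) : MP) := by rw [telescope_sum]
      rcases mp_cases (∑ i : Fin k, A (f i) (f ⟨(i.1 + 1) % k, Nat.mod_lt _ hk⟩)) with hs | ⟨s, hs⟩
      · rw [hs]; simp
      · rw [hs, WithBot.coe_le_coe] at hsle
        rw [hs]
        simp only [WithBot.map_coe, WithBot.coe_le_coe]
        rw [div_le_iff₀ (by exact_mod_cast hk : (0 : ℝ) < (k : ℝ))]
        calc s ≤ k * lam := hsle
          _ = lam * k := mul_comm _ _
    rw [hmcm]
    apply le_antisymm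
    · -- lam ≤ sSup S : exhibit a cycle with mean lam
      -- choose successor function
      have hexact : ∀ i, ∃ j, A i j = ((lam + x i - x j : ℝ) : MP) := by
        intro i
        obtain ⟨j, hj⟩ := hex i
        rw [← WithBot.coe_add] at hj
        exact ⟨j, mp_eq_coe_of_add_coe_eq_coe hj⟩
      choose σ hσ using hexact
      -- find a cycle of σ
      obtain ⟨a, b, hab, hgab⟩ :=
        Finite.exists_ne_map_eq_of_infinite (fun t : ℕ => σ^[t] (Classical.arbitrary (Fin n)))
      wlog hab' : a < b generalizing a b
      · exact this b a hab.symm hgab.symm (hab.lt_or_gt.resolve_left hab')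
      set i0 := Classical.arbitrary (Fin n)
      set p := b - a with hp'
      have hp : 0 < p := Nat.sub_pos_of_lt hab'
      haveI : NeZero p := ⟨hp.ne'⟩
      set j : Fin n := σ^[a] i0 with hj
      have hcyc : σ^[p] j = j := by
        rw [hj, ← Function.iterate_add_apply, hp', Nat.sub_add_cancel hab'.le]
        exact hgab.symm
      set f : Fin p → Fin n := fun t => σ^[t.1] j with hf
      have hstep : ∀ t : Fin p, f (t + 1) = σ (f t) := by
        intro t
        have hval : ((t + 1 : Fin p)).val = (t.1 + 1) % p := by
          rw [Fin.add_def]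
          show (t.1 + (1 : Fin p).val) % p = (t.1 + 1) % p
          rw [Fin.val_one']
          exact Nat.add_mod_mod _ _ _
        show σ^[(t + 1 : Fin p).val] j = σ (σ^[t.1] j)
        rw [hval]
        have hsucc : σ (σ^[t.1] j) = σ^[t.1 + 1] j := (Function.iterate_succ_apply' σ t.1 j).symm
        rw [hsucc]
        rcases Nat.lt_or_ge (t.1 + 1) p with hlt | hge
        · rw [Nat.mod_eq_of_lt hlt]
        · have he : t.1 + 1 = p := le_antisymm t.isLt hge
          rw [he, Nat.mod_self, Function.iterate_zero_apply, hcyc]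
      have hmem : ((lam : ℝ) : MP) ∈ S := by
        refine ⟨p, hp, f, ?_⟩
        have hsum : (∑ i : Fin p, A (f i) (f ⟨(i.1 + 1) % p, Nat.mod_lt _ hp⟩))
            = ((p * lam : ℝ) : MP) := by
          calc (∑ i : Fin p, A (f i) (f ⟨(i.1 + 1) % p, Nat.mod_lt _ hp⟩))
              = ∑ i : Fin p, ((lam + x (f i) - x (f (i + 1)) : ℝ) : MP) := by
                apply Finset.sum_congr rfl
                intro i _
                rw [fin_mk_succ_eq_add_one, hstep, hσ]
            _ = ((∑ i : Fin p, (lam + x (f i) - x (f (i + 1))) : ℝ) : MP) :=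
                (WithBot.coe_sum _ _).symm
            _ = ((p * lam : ℝ) : MP) := by rw [telescope_sum]
        rw [hsum, WithBot.map_coe]
        rw [WithBot.coe_inj]
        field_simp
      exact le_csSup ⟨_, hub⟩ hmem
    · exact csSup_le hSne hub
end

section
/- Let A be an irreducible n×n matrix over the max-plus semiring. Then every eigenvector of A is finite (all components in ℝ), and consequently λ(A) is the unique eigenvalue of A. -/
lemma mp_coe_sum {ι : Type*} (s : Finset ι) (g : ι → ℝ) :
    ((∑ i ∈ s, g i : ℝ) : MP) = ∑ i ∈ s, (g i : MP) := by
  induction s using Finset.cons_induction with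
  | empty => simp
  | cons a s ha ih => rw [Finset.sum_cons, Finset.sum_cons, WithBot.coe_add, ih]

lemma mp_sum_bot {ι : Type*} {s : Finset ι} {g : ι → MP} {i : ι} (hi : i ∈ s)
    (h : g i = ⊥) : ∑ j ∈ s, g j = ⊥ := by
  classical
  rw [← Finset.add_sum_erase s g hi, h, WithBot.bot_add]

lemma fin_succ_mod {k : ℕ} [NeZero k] (hk : 0 < k) (j : Fin k) :
    (⟨(j.1 + 1) % k, Nat.mod_lt _ hk⟩ : Fin k) = j + 1 := by
  apply Fin.ext
  rw [Fin.add_def, Fin.val_one']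
  show (j.1 + 1) % k = (j.1 + 1 % k) % k
  conv_lhs => rw [Nat.add_mod, Nat.mod_eq_of_lt j.2]

lemma fin_sum_shift {k : ℕ} [NeZero k] (g : Fin k → ℝ) :
    ∑ j : Fin k, g (j + 1) = ∑ j : Fin k, g j :=
  Fintype.sum_equiv (Equiv.addRight 1) _ _ fun j => rfl

lemma cycle_sum {k n : ℕ} [NeZero k] (f : Fin k → Fin n) (L : ℝ) (X : Fin n → ℝ) :
    ∑ j : Fin k, (L + X (f j) - X (f (j + 1))) = k * L := by
  rw [Finset.sum_sub_distrib, Finset.sum_add_distrib, Finset.sum_const, Finset.card_univ,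
    Fintype.card_fin, show (∑ j : Fin k, X (f (j + 1))) = ∑ j : Fin k, X (f j) from
      fin_sum_shift (fun i => X (f i)), nsmul_eq_mul]
  ring
/-- If `A` is irreducible (the digraph with arcs `i → j` whenever
`A i j > ε` is strongly connected), then every eigenvector of `A` is finite and `λ(A)`
is the unique eigenvalue of `A`. -/
theorem irreducible_eigenvectors_finite_and_unique_eigenvalue (n : ℕ) (hn : 0 < n)
    (A : Matrix (Fin n) (Fin n) MP)
    (hirr : ∀ i j : Fin n, Relation.ReflTransGen (fun a b : Fin n => A a b ≠ ⊥) i j) :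
    ∀ (l : MP) (x : Fin n → MP), (∃ i, x i ≠ ⊥) →
      mpMulVec A x = (fun i => l + x i) →
      (∀ i, x i ≠ ⊥) ∧ l = mcm A := by
  intro l x hex heig
  obtain ⟨j0, hj0⟩ := hex
  have heig' : ∀ i, Finset.univ.sup (fun k => A i k + x k) = l + x i := fun i => congrFun heig i
  have key : ∀ a b : Fin n, A a b ≠ ⊥ → x b ≠ ⊥ → x a ≠ ⊥ := by
    intro a b hab hxb hxa
    have h1 : A a b + x b ≤ l + x a := by
      rw [← heig' a]; exact Finset.le_sup (f := fun k => A a k + x k) (Finset.mem_univ b)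
    rw [hxa, WithBot.add_bot, le_bot_iff, WithBot.add_eq_bot] at h1
    tauto
  have hx : ∀ i, x i ≠ ⊥ := fun i =>
    Relation.ReflTransGen.head_induction_on (hirr i j0) hj0
      (fun hac _ ih => key _ _ hac ih)
  refine ⟨hx, ?_⟩
  choose X hX using fun i => WithBot.ne_bot_iff_exists.mp (hx i)
  unfold mcm
  rcases eq_or_ne l ⊥ with rfl | hl
  · -- degenerate case: A ≡ ⊥
    have hA : ∀ i j, A i j = ⊥ := by
      intro i j
      have h1 : A i j + x j ≤ (⊥ : MP) + x i := by
        rw [← heig' i]; exact Finset.le_sup (f := fun k => A i k + x k) (Finset.mem_univ j)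
      rw [WithBot.bot_add, le_bot_iff, WithBot.add_eq_bot] at h1
      rcases h1 with h | h
      · exact h
      · exact absurd h (hx j)
    have hmem : (⊥ : MP) ∈ {y : MP | ∃ k : ℕ, ∃ hk : 0 < k, ∃ f : Fin k → Fin n,
        y = WithBot.map (fun w : ℝ => w / (k : ℝ))
          (∑ i : Fin k, A (f i) (f ⟨(i.1 + 1) % k, Nat.mod_lt _ hk⟩))} := by
      refine ⟨1, one_pos, fun _ => ⟨0, hn⟩, ?_⟩
      rw [Fin.sum_univ_one, hA, WithBot.map_bot]
    have hub : ∀ y ∈ {y : MP | ∃ k : ℕ, ∃ hk : 0 < k, ∃ f : Fin k → Fin n,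
        y = WithBot.map (fun w : ℝ => w / (k : ℝ))
          (∑ i : Fin k, A (f i) (f ⟨(i.1 + 1) % k, Nat.mod_lt _ hk⟩))}, y ≤ (⊥ : MP) := by
      rintro y ⟨k, hk, f, rfl⟩
      rw [mp_sum_bot (Finset.mem_univ (⟨0, hk⟩ : Fin k)) (hA _ _), WithBot.map_bot]
    exact (le_antisymm (csSup_le ⟨⊥, hmem⟩ hub) bot_le).symm
  · obtain ⟨L, rfl⟩ := WithBot.ne_bot_iff_exists.mp hl
    haveI : Nonempty (Fin n) := ⟨⟨0, hn⟩⟩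
    -- choose a maximizer σ i for each row i
    have hσex : ∀ i : Fin n, ∃ s : Fin n, A i s + x s = (L : MP) + x i := by
      intro i
      obtain ⟨s, -, hs⟩ :=
        Finset.exists_mem_eq_sup Finset.univ Finset.univ_nonempty (fun k => A i k + x k)
      exact ⟨s, hs.symm.trans (heig' i)⟩
    choose σ hσ using hσex
    -- find a σ-cycle
    obtain ⟨a, b, hab, hfix0⟩ : ∃ a b : ℕ, a < b ∧ σ^[a] ⟨0, hn⟩ = σ^[b] ⟨0, hn⟩ := by
      obtain ⟨s, t, hst, hmap⟩ :=
        Finite.exists_ne_map_eq_of_infinite (fun m : ℕ => σ^[m] (⟨0, hn⟩ : Fin n))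
      rcases hst.lt_or_gt with h | h
      · exact ⟨s, t, h, hmap⟩
      · exact ⟨t, s, h, hmap.symm⟩
    set k := b - a with hkdef
    have hk' : 0 < k := Nat.sub_pos_of_lt hab
    haveI : NeZero k := ⟨hk'.ne'⟩
    set c : Fin n := σ^[a] ⟨0, hn⟩ with hcdef
    have hc : σ^[k] c = c := by
      rw [hcdef, ← Function.iterate_add_apply, Nat.sub_add_cancel hab.le, ← hfix0]
    set f : Fin k → Fin n := fun j => σ^[j.1] c with hfdef
    have hstep : ∀ j : Fin k, f ⟨(j.1 + 1) % k, Nat.mod_lt _ hk'⟩ = σ (f j) := by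
      intro j
      show σ^[(j.1 + 1) % k] c = σ (σ^[j.1] c)
      rw [← Function.iterate_succ_apply' σ j.1 c]
      rcases Nat.lt_or_ge (j.1 + 1) k with h | h
      · rw [Nat.mod_eq_of_lt h]
      · have he : j.1 + 1 = k := le_antisymm j.2 h
        rw [he, Nat.mod_self, Function.iterate_zero_apply, Nat.succ_eq_add_one, he, hc]
    have hstep' : ∀ j : Fin k, f (j + 1) = σ (f j) := by
      intro j; rw [← fin_succ_mod hk' j]; exact hstep j
    -- entries along the cycle are finite
    have hAf : ∀ j : Fin k, A (f j) (σ (f j)) ≠ ⊥ := by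
      intro j hbot
      have h := hσ (f j)
      rw [hbot, WithBot.bot_add, ← hX (f j), ← WithBot.coe_add] at h
      exact WithBot.coe_ne_bot h.symm
    choose aj haj using fun j => WithBot.ne_bot_iff_exists.mp (hAf j)
    have hreal : ∀ j : Fin k, aj j = L + X (f j) - X (f (j + 1)) := by
      intro j
      have h := hσ (f j)
      rw [← haj j, ← hX (σ (f j)), ← hX (f j), ← WithBot.coe_add, ← WithBot.coe_add,
        WithBot.coe_inj] at h
      rw [hstep' j]
      linarith [h]
    -- the cycle achieves mean L
    have hsum : (∑ j : Fin k, A (f j) (f ⟨(j.1 + 1) % k, Nat.mod_lt _ hk'⟩))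
        = (((k : ℝ) * L : ℝ) : MP) := by
      have h1 : ∀ j : Fin k, A (f j) (f ⟨(j.1 + 1) % k, Nat.mod_lt _ hk'⟩) = ((aj j : ℝ) : MP) :=
        fun j => (congrArg (A (f j)) (hstep j)).trans (haj j).symm
      rw [Finset.sum_congr rfl (fun j _ => h1 j), ← mp_coe_sum]
      rw [Finset.sum_congr rfl (fun j _ => hreal j), cycle_sum]
    have hmem : ((L : ℝ) : MP) ∈ {y : MP | ∃ k : ℕ, ∃ hk : 0 < k, ∃ f : Fin k → Fin n,
        y = WithBot.map (fun w : ℝ => w / (k : ℝ))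
          (∑ i : Fin k, A (f i) (f ⟨(i.1 + 1) % k, Nat.mod_lt _ hk⟩))} := by
      refine ⟨k, hk', f, ?_⟩
      rw [hsum, WithBot.map_coe, mul_div_cancel_left₀ L (Nat.cast_ne_zero.mpr hk'.ne')]
    -- L is an upper bound for all cycle means
    have hub : ∀ y ∈ {y : MP | ∃ k : ℕ, ∃ hk : 0 < k, ∃ f : Fin k → Fin n,
        y = WithBot.map (fun w : ℝ => w / (k : ℝ))
          (∑ i : Fin k, A (f i) (f ⟨(i.1 + 1) % k, Nat.mod_lt _ hk⟩))}, y ≤ ((L : ℝ) : MP) := by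
      rintro y ⟨m, hm, g, rfl⟩
      haveI : NeZero m := ⟨hm.ne'⟩
      have hrw : ∀ j : Fin m, A (g j) (g ⟨(j.1 + 1) % m, Nat.mod_lt _ hm⟩) = A (g j) (g (j + 1)) :=
        fun j => congrArg (A (g j) ∘ g) (fin_succ_mod hm j)
      rw [Finset.sum_congr rfl (fun j _ => hrw j)]
      by_cases hbot : ∀ j : Fin m, A (g j) (g (j + 1)) ≠ ⊥
      · choose bj hbj using fun j => WithBot.ne_bot_iff_exists.mp (hbot j)
        have hle : ∀ j : Fin m, bj j ≤ L + X (g j) - X (g (j + 1)) := by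
          intro j
          have h1 : A (g j) (g (j + 1)) + x (g (j + 1)) ≤ (L : MP) + x (g j) := by
            rw [← heig' (g j)]; exact Finset.le_sup (f := fun k => A (g j) k + x k) (Finset.mem_univ (g (j+1)))
          rw [← hbj j, ← hX (g (j + 1)), ← hX (g j), ← WithBot.coe_add, ← WithBot.coe_add,
            WithBot.coe_le_coe] at h1
          linarith
        have hsle : ∑ j : Fin m, bj j ≤ (m : ℝ) * L := by
          calc ∑ j : Fin m, bj j ≤ ∑ j : Fin m, (L + X (g j) - X (g (j + 1))) :=
                Finset.sum_le_sum (fun j _ => hle j)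
            _ = (m : ℝ) * L := cycle_sum g L X
        rw [Finset.sum_congr rfl (fun j _ => (hbj j).symm), ← mp_coe_sum, WithBot.map_coe,
          WithBot.coe_le_coe]
        rw [div_le_iff₀ (by exact_mod_cast hm : (0:ℝ) < (m:ℝ))]
        linarith
      · push_neg at hbot
        obtain ⟨j, hj⟩ := hbot
        rw [mp_sum_bot (Finset.mem_univ j) hj, WithBot.map_bot]
        exact bot_le
    exact (le_antisymm (csSup_le ⟨_, hmem⟩ hub) (le_csSup ⟨_, hub⟩ hmem)).symm
end

section
/- If A and B are invertible square matrices over the max-plus semiring, then A⊠B is invertible and (A⊠B)^{-1} = A^{-1}⊠B^{-1}. -/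
private lemma sup_prod_add {β γ : Type*} [Fintype β] [Fintype γ] [Nonempty β] [Nonempty γ]
    (f : β → MP) (g : γ → MP) :
    Finset.univ.sup (fun k : γ × β => f k.2 + g k.1)
      = Finset.univ.sup f + Finset.univ.sup g := by
  apply le_antisymm
  · exact Finset.sup_le fun k _ =>
      add_le_add (Finset.le_sup (Finset.mem_univ k.2)) (Finset.le_sup (Finset.mem_univ k.1))
  · obtain ⟨b, -, hb⟩ := Finset.exists_mem_eq_sup Finset.univ Finset.univ_nonempty f
    obtain ⟨c, -, hc⟩ := Finset.exists_mem_eq_sup Finset.univ Finset.univ_nonempty g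
    rw [hb, hc]
    exact Finset.le_sup (f := fun k : γ × β => f k.2 + g k.1) (Finset.mem_univ (c, b))

private lemma tensor_mul_unit {n m : ℕ}
    (A A' : Matrix (Fin n) (Fin n) MP) (B B' : Matrix (Fin m) (Fin m) MP)
    (hA : mpMul A A' = mpUnit (Fin n)) (hB : mpMul B B' = mpUnit (Fin m)) :
    mpMul (mpTensor A B) (mpTensor A' B') = mpUnit (Fin m × Fin n) := by
  funext p q
  have : Nonempty (Fin n) := ⟨p.2⟩
  have : Nonempty (Fin m) := ⟨p.1⟩
  have h1 := congrFun (congrFun hA p.2) q.2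
  have h2 := congrFun (congrFun hB p.1) q.1
  have key : (fun k : Fin m × Fin n => mpTensor A B p k + mpTensor A' B' k q)
      = fun k : Fin m × Fin n => (fun b => A p.2 b + A' b q.2) k.2
          + (fun c => B p.1 c + B' c q.1) k.1 := by
    funext k
    simp only [mpTensor]
    exact add_add_add_comm _ _ _ _
  show Finset.univ.sup (fun k => mpTensor A B p k + mpTensor A' B' k q) = _
  rw [key, sup_prod_add (fun b => A p.2 b + A' b q.2) (fun c => B p.1 c + B' c q.1)]
  have : mpMul A A' p.2 q.2 + mpMul B B' p.1 q.1 = mpUnit (Fin m × Fin n) p q := by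
    rw [h1, h2]
    simp only [mpUnit, Prod.ext_iff]
    by_cases ha : p.2 = q.2 <;> by_cases hb : p.1 = q.1 <;> simp [ha, hb]
  exact this

/-- If `A` and `B` are invertible (with inverses `A'` and `B'`),
then `A ⊠ B` is invertible with inverse `A' ⊠ B'`. -/
theorem tensor_invertible (n m : ℕ)
    (A A' : Matrix (Fin n) (Fin n) MP) (B B' : Matrix (Fin m) (Fin m) MP)
    (hA : mpMul A A' = mpUnit (Fin n) ∧ mpMul A' A = mpUnit (Fin n))
    (hB : mpMul B B' = mpUnit (Fin m) ∧ mpMul B' B = mpUnit (Fin m)) :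
    mpMul (mpTensor A B) (mpTensor A' B') = mpUnit (Fin m × Fin n) ∧
    mpMul (mpTensor A' B') (mpTensor A B) = mpUnit (Fin m × Fin n) := by
  exact ⟨tensor_mul_unit A A' B B' hA.1 hB.1, tensor_mul_unit A' A B' B hA.2 hB.2⟩
end

section
/- Let A be an n×n matrix and B an m×m matrix over the max-plus semiring with A⊗x = λ⊗x and B⊗y = μ⊗y for vectors x ≠ ε, y ≠ ε. Then for any α, β ∈ ℝ, the scalar max(α+λ, β+μ) is an eigenvalue of the matrix α⊗(A⊠I_m) ⊕ β⊗(I_n⊠B), with eigenvector x⊠y; here I_n, I_m are unit matrices of orders n and m. -/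
/-! Tropical matrix–vector multiplication distributes over `⊕`, commutes with scalar `⊗`, and
obeys the mixed-product rule `(A ⊠ B) ⊗ (x ⊠ y) = (A ⊗ x) ⊠ (B ⊗ y)`, because a supremum over a
product index set of a sum splits into a sum of suprema. Since `I ⊗ v = v`, the two summands
applied to `x ⊠ y` become `α ⊗ ((A ⊗ x) ⊠ y)` and `β ⊗ (x ⊠ (B ⊗ y))`, that is
`(α + λ) ⊗ (x ⊠ y)` and `(β + μ) ⊗ (x ⊠ y)`. -/

namespace WithBot

variable {M : Type*} [LinearOrder M]

theorem add_finset_sup [Add M] [AddLeftMono M] {ι : Type*} (c : WithBot M) (s : Finset ι)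
    (f : ι → WithBot M) : c + s.sup f = s.sup fun i => c + f i :=
  Finset.apply_sup_eq_sup_comp_of_linearOrder (c + ·) add_right_mono (WithBot.add_bot c)

theorem finset_sup_add_sup [AddCommMonoid M] [IsOrderedAddMonoid M] {ι κ : Type*}
    (s : Finset ι) (t : Finset κ) (f : ι → WithBot M) (g : κ → WithBot M) :
    s.sup f + t.sup g = (s ×ˢ t).sup fun ij => f ij.1 + g ij.2 := by
  simp only [Finset.sup_product_left, ← add_finset_sup, add_comm _ (t.sup g)]

end WithBot

-- Stated for bare functions: with `Matrix` binders `rw` cannot match entries such as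
-- `a + mpTensor A B p q`, since `Matrix` does not unfold at reducible transparency.
theorem mpMulVec_max {α β : Type*} [Fintype β] (M N : α → β → MP) (v : β → MP) :
    mpMulVec (fun p q => max (M p q) (N p q)) v
      = fun p => max (mpMulVec M v p) (mpMulVec N v p) := by
  funext p
  simp only [mpMulVec, ← max_add_add_right]
  exact Finset.sup_sup (f := fun q => M p q + v q) (g := fun q => N p q + v q)

theorem mpMulVec_const_add {α β : Type*} [Fintype β] (c : MP) (M : Matrix α β MP) (v : β → MP) :
    mpMulVec (fun p q => c + M p q) v = fun p => c + mpMulVec M v p := by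
  funext p
  simp only [mpMulVec, WithBot.add_finset_sup, add_assoc]

theorem mpMulVec_mpUnit {α : Type*} [Fintype α] [DecidableEq α] (v : α → MP) :
    mpMulVec (mpUnit α) v = v := by
  funext k
  simp [mpMulVec, mpUnit, ite_add, Finset.sup_ite, Finset.filter_eq]

theorem mpMulVec_mpTensor {α β γ δ : Type*} [Fintype β] [Fintype δ]
    (A : Matrix α β MP) (B : Matrix γ δ MP) (x : β → MP) (y : δ → MP) :
    mpMulVec (mpTensor A B) (mpTensorVec x y) = mpTensorVec (mpMulVec A x) (mpMulVec B y) := by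
  funext ⟨k, i⟩
  simp only [mpTensorVec, mpMulVec, mpTensor]
  rw [add_comm, WithBot.finset_sup_add_sup, Finset.univ_product_univ]
  congr! 2 with q
  rw [add_add_add_comm, add_comm]

theorem mpTensorVec_ne_bot {α γ : Type*} {x : α → MP} {y : γ → MP}
    (hx : ∃ i, x i ≠ ⊥) (hy : ∃ k, y k ≠ ⊥) : ∃ p, mpTensorVec x y p ≠ ⊥ := by
  obtain ⟨i, hi⟩ := hx
  obtain ⟨k, hk⟩ := hy
  exact ⟨(k, i), WithBot.add_ne_bot.2 ⟨hi, hk⟩⟩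

/-- If `A ⊗ x = λ ⊗ x`, `B ⊗ y = μ ⊗ y` with `x ≠ ε`, `y ≠ ε`, then for any
`α, β ∈ ℝ` the scalar `max (α + λ) (β + μ)` is an eigenvalue of
`α ⊗ (A ⊠ I_m) ⊕ β ⊗ (I_n ⊠ B)` with eigenvector `x ⊠ y`. -/
theorem tensor_sum_eigenvalue (n m : ℕ)
    (A : Matrix (Fin n) (Fin n) MP) (B : Matrix (Fin m) (Fin m) MP)
    (x : Fin n → MP) (y : Fin m → MP) (l μ : MP)
    (hx0 : ∃ i, x i ≠ ⊥) (hy0 : ∃ k, y k ≠ ⊥)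
    (hx : mpMulVec A x = fun i => l + x i)
    (hy : mpMulVec B y = fun k => μ + y k)
    (a b : ℝ) :
    (∃ p, mpTensorVec x y p ≠ ⊥) ∧
      mpMulVec
        (fun p q => max ((a : MP) + mpTensor A (mpUnit (Fin m)) p q)
                        ((b : MP) + mpTensor (mpUnit (Fin n)) B p q))
        (mpTensorVec x y)
      = fun p => max ((a : MP) + l) ((b : MP) + μ) + mpTensorVec x y p := by
  refine ⟨mpTensorVec_ne_bot hx0 hy0, ?_⟩
  rw [mpMulVec_max, mpMulVec_const_add, mpMulVec_const_add, mpMulVec_mpTensor,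
    mpMulVec_mpTensor, mpMulVec_mpUnit, mpMulVec_mpUnit, hx, hy]
  funext ⟨k, i⟩
  simp only [mpTensorVec, ← max_add_add_right, add_assoc, add_left_comm μ]
end

section
/- If the square max-plus matrices A and B each have finite eigenvectors (in particular, if they are irreducible), then λ(A⊠B) = λ(A)⊗λ(B), i.e., the maximum cycle mean of A⊠B equals λ(A)+λ(B). -/
-- helpers
private lemma sum_bot_mp {ι : Type*} (s : Finset ι) (hs : s.Nonempty) :
    (∑ _i ∈ s, (⊥ : MP)) = ⊥ := by
  induction s using Finset.cons_induction with
  | empty => exact absurd hs (by simp)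
  | cons i s hi ih => rw [Finset.sum_cons, WithBot.bot_add]

private lemma shift_bij (k : ℕ) (hk : 0 < k) :
    Function.Bijective (fun i : Fin k => (⟨(i.1 + 1) % k, Nat.mod_lt _ hk⟩ : Fin k)) := by
  refine Finite.injective_iff_bijective.mp ?_
  intro i j hij
  have h : (i.1 + 1) % k = (j.1 + 1) % k := congrArg Fin.val hij
  have h2 : i.1 % k = j.1 % k := Nat.ModEq.add_right_cancel' 1 h
  exact Fin.ext (by rwa [Nat.mod_eq_of_lt i.2, Nat.mod_eq_of_lt j.2] at h2)

private lemma real_cycle_sum {α : Type*} (k : ℕ) (hk : 0 < k) (x : α → ℝ) (c : ℝ)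
    (f : Fin k → α) :
    (∑ i : Fin k, (c + x (f i) - x (f ⟨(i.1 + 1) % k, Nat.mod_lt _ hk⟩))) = k * c := by
  have hre : (∑ i : Fin k, x (f ⟨(i.1 + 1) % k, Nat.mod_lt _ hk⟩)) = ∑ i : Fin k, x (f i) :=
    Fintype.sum_bijective _ (shift_bij k hk) _ _ (fun i => rfl)
  rw [Finset.sum_sub_distrib, Finset.sum_add_distrib, hre, Finset.sum_const,
    Finset.card_univ, Fintype.card_fin, nsmul_eq_mul]
  ring

private lemma sup_prod_mp {β γ : Type*} [Fintype β] [Fintype γ] [Nonempty β] [Nonempty γ]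
    (f : β → MP) (g : γ → MP) :
    (Finset.univ.sup fun p : γ × β => f p.2 + g p.1) =
      Finset.univ.sup f + Finset.univ.sup g := by
  apply le_antisymm
  · exact Finset.sup_le fun p _ =>
      add_le_add (Finset.le_sup (Finset.mem_univ p.2)) (Finset.le_sup (Finset.mem_univ p.1))
  · obtain ⟨b, -, hb⟩ := Finset.exists_mem_eq_sup Finset.univ Finset.univ_nonempty f
    obtain ⟨c, -, hcg⟩ := Finset.exists_mem_eq_sup Finset.univ Finset.univ_nonempty g
    rw [hb, hcg]
    exact Finset.le_sup (f := fun p : γ × β => f p.2 + g p.1) (Finset.mem_univ (c, b))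

private lemma mcm_eq_of_eig {α : Type*} [Fintype α] [Nonempty α] (M : Matrix α α MP)
    (l : MP) (x : α → ℝ)
    (h : mpMulVec M (fun i => (x i : MP)) = fun i => l + (x i : MP)) : mcm M = l := by
  have hc : ∀ i, (Finset.univ.sup fun k => M i k + (x k : MP)) = l + (x i : MP) :=
    fun i => congrFun h i
  set S := {z : MP | ∃ k : ℕ, ∃ hk : 0 < k, ∃ f : Fin k → α,
    z = WithBot.map (fun w : ℝ => w / (k : ℝ))
      (∑ i : Fin k, M (f i) (f ⟨(i.1 + 1) % k, Nat.mod_lt _ hk⟩))} with hSdef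
  have hmcm : mcm M = sSup S := rfl
  obtain a₀ := Classical.arbitrary α
  induction l using WithBot.recBotCoe with
  | bot =>
    -- every entry is ⊥
    have hbot : ∀ i j, M i j = ⊥ := by
      intro i j
      have h1 : M i j + (x j : MP) ≤ ⊥ := by
        calc M i j + (x j : MP)
            ≤ Finset.univ.sup (fun k => M i k + (x k : MP)) :=
              Finset.le_sup (f := fun k => M i k + (x k : MP)) (Finset.mem_univ j)
          _ = ⊥ := by rw [hc i, WithBot.bot_add]
      rcases WithBot.add_eq_bot.mp (le_bot_iff.mp h1) with h' | h'
      · exact h'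
      · exact absurd h' (WithBot.coe_ne_bot)
    have hub : ∀ a ∈ S, a ≤ (⊥ : MP) := by
      rintro a ⟨k, hk, f, rfl⟩
      haveI : Nonempty (Fin k) := ⟨⟨0, hk⟩⟩
      have hs : (∑ i : Fin k, M (f i) (f ⟨(i.1 + 1) % k, Nat.mod_lt _ hk⟩)) = ⊥ := by
        rw [Finset.sum_congr rfl (fun i _ => hbot (f i) _)]
        exact sum_bot_mp _ Finset.univ_nonempty
      rw [hs, WithBot.map_bot]
    have hmem : (⊥ : MP) ∈ S := by
      refine ⟨1, one_pos, fun _ => a₀, ?_⟩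
      simp [hbot]
    rw [hmcm]
    exact le_antisymm (csSup_le ⟨⊥, hmem⟩ hub) bot_le
  | coe c =>
    have entry_le : ∀ i j, M i j ≤ ((c + x i - x j : ℝ) : MP) := by
      intro i j
      have h1 : M i j + (x j : MP) ≤ (c : MP) + (x i : MP) :=
        le_of_le_of_eq (Finset.le_sup (f := fun k => M i k + (x k : MP)) (Finset.mem_univ j)) (hc i)
      by_cases hb : M i j = ⊥
      · rw [hb]; exact bot_le
      · obtain ⟨a, hM⟩ := WithBot.ne_bot_iff_exists.mp hb
        rw [← hM, ← WithBot.coe_add, ← WithBot.coe_add, WithBot.coe_le_coe] at h1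
        rw [← hM]
        exact WithBot.coe_le_coe.mpr (by linarith)
    have hub : ∀ a ∈ S, a ≤ ((c : ℝ) : MP) := by
      rintro a ⟨k, hk, f, rfl⟩
      have hsum : (∑ i : Fin k, M (f i) (f ⟨(i.1 + 1) % k, Nat.mod_lt _ hk⟩))
          ≤ ((k * c : ℝ) : MP) := by
        calc (∑ i : Fin k, M (f i) (f ⟨(i.1 + 1) % k, Nat.mod_lt _ hk⟩))
            ≤ ∑ i : Fin k, ((c + x (f i) - x (f ⟨(i.1 + 1) % k, Nat.mod_lt _ hk⟩) : ℝ) : MP) :=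
              Finset.sum_le_sum (fun i _ => entry_le _ _)
          _ = ((∑ i : Fin k, (c + x (f i) - x (f ⟨(i.1 + 1) % k, Nat.mod_lt _ hk⟩)) : ℝ) : MP) :=
              by push_cast; ring
          _ = ((k * c : ℝ) : MP) := by rw [real_cycle_sum k hk x c f]
      by_cases hb : (∑ i : Fin k, M (f i) (f ⟨(i.1 + 1) % k, Nat.mod_lt _ hk⟩)) = ⊥
      · rw [hb, WithBot.map_bot]; exact bot_le
      · obtain ⟨s, hs⟩ := WithBot.ne_bot_iff_exists.mp hb
        rw [← hs] at hsum ⊢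
        rw [WithBot.coe_le_coe] at hsum
        rw [WithBot.map_coe, WithBot.coe_le_coe]
        have hk' : (0 : ℝ) < k := Nat.cast_pos.mpr hk
        rw [div_le_iff₀ hk']
        linarith [mul_comm c (k : ℝ)]
    -- attainment function g
    have hatt : ∀ i, ∃ j, M i j + (x j : MP) = ((c + x i : ℝ) : MP) := by
      intro i
      obtain ⟨j, -, hj⟩ := Finset.exists_mem_eq_sup Finset.univ Finset.univ_nonempty
        (fun k => M i k + (x k : MP))
      exact ⟨j, by rw [← hj, hc i, WithBot.coe_add]⟩
    choose g hg using hatt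
    have hgv : ∀ i, M i (g i) = ((c + x i - x (g i) : ℝ) : MP) := by
      intro i
      have h1 := hg i
      by_cases hb : M i (g i) = ⊥
      · rw [hb, WithBot.bot_add] at h1
        exact absurd h1.symm (WithBot.coe_ne_bot)
      · obtain ⟨a, hM⟩ := WithBot.ne_bot_iff_exists.mp hb
        rw [← hM, ← WithBot.coe_add, WithBot.coe_inj] at h1
        rw [← hM, WithBot.coe_inj]
        linarith
    -- pigeonhole: a cycle for g
    have hcyc : ∃ (b : α) (k : ℕ), 0 < k ∧ g^[k] b = b := by
      have hni : ¬ Function.Injective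
          (fun t : Fin (Fintype.card α + 1) => g^[t.1] a₀) := by
        intro hinj
        have := Fintype.card_le_of_injective _ hinj
        simp at this
      obtain ⟨p, q, hpq, hne⟩ := Function.not_injective_iff.mp hni
      have hvne : p.1 ≠ q.1 := fun hv => hne (Fin.ext hv)
      rcases hvne.lt_or_gt with hlt | hlt
      · refine ⟨g^[p.1] a₀, q.1 - p.1, by omega, ?_⟩
        rw [← Function.iterate_add_apply, (by omega : q.1 - p.1 + p.1 = q.1)]
        exact hpq.symm
      · refine ⟨g^[q.1] a₀, p.1 - q.1, by omega, ?_⟩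
        rw [← Function.iterate_add_apply, (by omega : p.1 - q.1 + q.1 = p.1)]
        exact hpq
    obtain ⟨b, k, hk, hb⟩ := hcyc
    set f : Fin k → α := fun i => g^[i.1] b with hfdef
    have key : ∀ i : Fin k, f ⟨(i.1 + 1) % k, Nat.mod_lt _ hk⟩ = g (f i) := by
      intro i
      by_cases hlt : i.1 + 1 < k
      · have hmod : (i.1 + 1) % k = i.1 + 1 := Nat.mod_eq_of_lt hlt
        show g^[(i.1 + 1) % k] b = g (g^[i.1] b)
        rw [hmod]
        exact Function.iterate_succ_apply' g i.1 b
      · have h1 : i.1 + 1 = k := by have := i.2; omega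
        have hmod : (i.1 + 1) % k = 0 := by rw [h1, Nat.mod_self]
        show g^[(i.1 + 1) % k] b = g (g^[i.1] b)
        rw [hmod]
        calc g^[0] b = b := rfl
          _ = g^[k] b := hb.symm
          _ = g^[i.1 + 1] b := by rw [h1]
          _ = g (g^[i.1] b) := Function.iterate_succ_apply' g i.1 b
    have hmem : ((c : ℝ) : MP) ∈ S := by
      refine ⟨k, hk, f, ?_⟩
      have hterm : ∀ i : Fin k, M (f i) (f ⟨(i.1 + 1) % k, Nat.mod_lt _ hk⟩)
          = ((c + x (f i) - x (f ⟨(i.1 + 1) % k, Nat.mod_lt _ hk⟩) : ℝ) : MP) := by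
        intro i
        rw [key i, hgv (f i)]
      have hsum : (∑ i : Fin k, M (f i) (f ⟨(i.1 + 1) % k, Nat.mod_lt _ hk⟩))
          = ((k * c : ℝ) : MP) := by
        rw [Finset.sum_congr rfl (fun i _ => hterm i)]
        rw [show (∑ i : Fin k, ((c + x (f i) - x (f ⟨(i.1 + 1) % k, Nat.mod_lt _ hk⟩) : ℝ) : MP))
            = ((∑ i : Fin k, (c + x (f i) - x (f ⟨(i.1 + 1) % k, Nat.mod_lt _ hk⟩)) : ℝ) : MP)
          from by push_cast; ring]
        rw [real_cycle_sum k hk x c f]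
      rw [hsum, WithBot.map_coe, WithBot.coe_inj]
      field_simp
    rw [hmcm]
    exact le_antisymm (csSup_le ⟨_, hmem⟩ hub) (le_csSup ⟨_, fun a ha => hub a ha⟩ hmem)

/-- If `A` and `B` each have finite eigenvectors, then
`λ(A ⊠ B) = λ(A) ⊗ λ(B)`. -/
theorem mcm_tensor (n m : ℕ)
    (A : Matrix (Fin n) (Fin n) MP) (B : Matrix (Fin m) (Fin m) MP)
    (hA : ∃ (l : MP) (x : Fin n → ℝ),
      mpMulVec A (fun i => (x i : MP)) = fun i => l + (x i : MP))
    (hB : ∃ (μ : MP) (y : Fin m → ℝ),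
      mpMulVec B (fun k => (y k : MP)) = fun k => μ + (y k : MP)) :
    mcm (mpTensor A B) = mcm A + mcm B := by
  have hempty : ∀ (β : Type) [Fintype β] [IsEmpty β] (M : Matrix β β MP), mcm M = ⊥ := by
    intro β _ _ M
    have he : {x : MP | ∃ k : ℕ, ∃ hk : 0 < k, ∃ f : Fin k → β,
        x = WithBot.map (fun w : ℝ => w / (k : ℝ))
          (∑ i : Fin k, M (f i) (f ⟨(i.1 + 1) % k, Nat.mod_lt _ hk⟩))} = (∅ : Set MP) := by
      ext z
      simp only [Set.mem_setOf_eq, Set.mem_empty_iff_false, iff_false]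
      rintro ⟨k, hk, f, -⟩
      exact IsEmpty.false (f ⟨0, hk⟩)
    show sSup _ = ⊥
    rw [he]
    exact WithBot.sSup_empty
  rcases Nat.eq_zero_or_pos n with hn | hn
  · subst hn
    haveI : IsEmpty (Fin 0 ) := inferInstance
    haveI : IsEmpty (Fin m × Fin 0) := inferInstance
    rw [hempty _ A, hempty _ (mpTensor A B), WithBot.bot_add]
  rcases Nat.eq_zero_or_pos m with hm | hm
  · subst hm
    haveI : IsEmpty (Fin 0 × Fin n) := inferInstance
    rw [hempty _ B, hempty _ (mpTensor A B), WithBot.add_bot]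
  obtain ⟨l, x, hx⟩ := hA
  obtain ⟨μ, y, hy⟩ := hB
  haveI : Nonempty (Fin n) := ⟨⟨0, hn⟩⟩
  haveI : Nonempty (Fin m) := ⟨⟨0, hm⟩⟩
  have hAe := mcm_eq_of_eig A l x hx
  have hBe := mcm_eq_of_eig B μ y hy
  have ht : mpMulVec (mpTensor A B) (fun p => ((x p.2 + y p.1 : ℝ) : MP))
      = fun p => (l + μ) + ((x p.2 + y p.1 : ℝ) : MP) := by
    funext p
    show (Finset.univ.sup fun q : Fin m × Fin n =>
        mpTensor A B p q + ((x q.2 + y q.1 : ℝ) : MP)) = _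
    have hterm : ∀ q : Fin m × Fin n,
        mpTensor A B p q + ((x q.2 + y q.1 : ℝ) : MP)
          = (A p.2 q.2 + (x q.2 : MP)) + (B p.1 q.1 + (y q.1 : MP)) := by
      intro q
      show (A p.2 q.2 + B p.1 q.1) + ((x q.2 + y q.1 : ℝ) : MP) = _
      rw [WithBot.coe_add]
      exact add_add_add_comm _ _ _ _
    rw [Finset.sup_congr rfl (fun q _ => hterm q)]
    rw [sup_prod_mp (fun j => A p.2 j + (x j : MP)) (fun i => B p.1 i + (y i : MP))]
    have h1 : (Finset.univ.sup fun j => A p.2 j + (x j : MP)) = l + (x p.2 : MP) :=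
      congrFun hx p.2
    have h2 : (Finset.univ.sup fun i => B p.1 i + (y i : MP)) = μ + (y p.1 : MP) :=
      congrFun hy p.1
    rw [h1, h2, WithBot.coe_add]
    exact add_add_add_comm _ _ _ _
  rw [mcm_eq_of_eig (mpTensor A B) (l + μ) (fun p => x p.2 + y p.1) ht, hAe, hBe]
end

section
/- Let A_1,...,A_r, B_1,...,B_r, C be max-plus matrices of compatible sizes and set D = A_1⊠B_1^T ⊕ A_2⊠B_2^T ⊕ ... ⊕ A_r⊠B_r^T. The matrix equation A_1⊗X⊗B_1 ⊕ ... ⊕ A_r⊗X⊗B_r = C has a solution X if and only if D⊗(D^#⊗'vec(C)) = vec(C). -/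
/-!  Max-plus algebra over `R̄ = ℝ ∪ {-∞}`, embedded in `EReal = ℝ ∪ {±∞}`
(membership in `R̄` is expressed by the hypothesis `≠ ⊤`), together with the dual
min-plus operations `a ⊕' b = min a b` and `a ⊗' b` (`= a + b` when
`{a,b} ≠ {-∞,+∞}`, and `(-∞) ⊗' (+∞) = (+∞) ⊗' (-∞) = +∞`). -/

/-- Dual addition `a ⊗' b` on `EReal`. -/
noncomputable def dualAdd (a b : EReal) : EReal := -((-a) + (-b))

/-- Max-plus matrix product over `EReal`. -/
noncomputable def eMul {α β γ : Type*} [Fintype β] (A : Matrix α β EReal)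
    (B : Matrix β γ EReal) : Matrix α γ EReal :=
  fun i j => ⨆ k, A i k + B k j

/-- Max-plus matrix-vector product over `EReal`. -/
noncomputable def eMulVec {α β : Type*} [Fintype β] (A : Matrix α β EReal)
    (x : β → EReal) : α → EReal :=
  fun i => ⨆ k, A i k + x k

/-- Min-plus matrix-vector product: `(M ⊗' v) i = min_k (M i k ⊗' v k)`. -/
noncomputable def eMinMulVec {α β : Type*} [Fintype β] (M : Matrix α β EReal)
    (v : β → EReal) : α → EReal :=
  fun i => ⨅ k, dualAdd (M i k) (v k)

/-- The conjugate `A^# = -Aᵀ`. -/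
noncomputable def econj {α β : Type*} (A : Matrix α β EReal) : Matrix β α EReal := fun i j => -(A j i)

/-- Tropical tensor product over `EReal`: block matrix whose `(k,l)` block is `A ⊗ B k l`. -/
noncomputable def eTensor {α β γ δ : Type*} (A : Matrix α β EReal) (B : Matrix γ δ EReal) :
    Matrix (γ × α) (δ × β) EReal :=
  fun p q => A p.2 q.2 + B p.1 q.1

/-- `vec X`: the columns of `X` stacked; component `(c, r)` is `X r c`. -/
def eVec {α β : Type*} (X : Matrix α β EReal) : β × α → EReal := fun p => X p.2 p.1

/-! Vectorization turns the equation into the system `D ⊗ vec X = vec C`. Over `EReal` the map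
`x ↦ D ⊗ x` is residuated, with upper adjoint `c ↦ D^# ⊗' c`, so the system is solvable iff the
principal solution `D^# ⊗' vec C` solves it. Finally, since `C` has no entry `+∞`, entries `+∞`
of a solution can be lowered to `-∞`. -/

theorem Monotone.map_iSup_of_finite {α β ι : Type*} [CompleteLinearOrder α] [CompleteLattice β]
    [Finite ι] {f : α → β} (hf : Monotone f) (hf_bot : f ⊥ = ⊥) (g : ι → α) :
    f (⨆ i, g i) = ⨆ i, f (g i) := by
  rcases isEmpty_or_nonempty ι with _ | _
  · simp [hf_bot, iSup_of_empty]
  · obtain ⟨i, hi⟩ := exists_eq_ciSup_of_finite (f := g)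
    refine le_antisymm ?_ hf.le_map_iSup
    rw [← hi]
    exact le_iSup (f ∘ g) i

theorem EReal.iSup_add_of_finite {ι : Type*} [Finite ι] (g : ι → EReal) (x : EReal) :
    (⨆ i, g i) + x = ⨆ i, g i + x :=
  Monotone.map_iSup_of_finite (fun _ _ h => add_le_add_left h x) (EReal.bot_add x) g

theorem EReal.add_iSup_of_finite {ι : Type*} [Finite ι] (x : EReal) (g : ι → EReal) :
    x + ⨆ i, g i = ⨆ i, x + g i := by
  simp only [add_comm x, EReal.iSup_add_of_finite]

-- No exception at `±∞`, thanks to the convention `(-∞) ⊗' (+∞) = +∞`.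
theorem add_le_iff_le_dualAdd_neg (a x c : EReal) : a + x ≤ c ↔ x ≤ dualAdd (-a) c := by
  rw [dualAdd, neg_neg, EReal.le_neg]
  induction a using EReal.rec <;> induction c using EReal.rec <;> induction x using EReal.rec <;>
    try simp
  all_goals (norm_cast; constructor <;> intro <;> linarith)

section Residuation

variable {α β : Type*} [Fintype β]

theorem gc_eMulVec_eMinMulVec_econj [Fintype α] (D : Matrix α β EReal) :
    GaloisConnection (eMulVec D) (eMinMulVec (econj D)) := by
  intro x c
  simp only [Pi.le_def, eMulVec, eMinMulVec, econj, iSup_le_iff, le_iInf_iff,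
    add_le_iff_le_dualAdd_neg]
  exact forall_comm

-- An entry `⊤` of a solution only meets entries `⊥` of `D`, so it can be replaced by `⊥`.
theorem exists_ne_top_eMulVec_eq_iff (D : Matrix α β EReal) {c : α → EReal}
    (hc : ∀ i, c i ≠ ⊤) :
    (∃ x : β → EReal, (∀ k, x k ≠ ⊤) ∧ eMulVec D x = c) ↔ ∃ x, eMulVec D x = c := by
  refine ⟨fun ⟨x, _, hx⟩ => ⟨x, hx⟩, fun ⟨x, hx⟩ => ?_⟩
  refine ⟨fun k => if x k = ⊤ then ⊥ else x k, fun k => by dsimp only; split_ifs <;> simp_all, ?_⟩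
  rw [← hx]
  funext i
  refine iSup_congr fun k => ?_
  dsimp only
  split_ifs with hk
  · have hle : D i k + x k ≤ c i := hx ▸ le_iSup (fun k => D i k + x k) k
    have hD : D i k = ⊥ := by
      by_contra hD
      rw [hk, EReal.add_top_of_ne_bot hD] at hle
      exact hc i (top_le_iff.mp hle)
    simp [hD]
  · rfl

theorem exists_ne_top_eMulVec_eq_iff_eMulVec_eMinMulVec_eq [Fintype α] (D : Matrix α β EReal)
    {c : α → EReal} (hc : ∀ i, c i ≠ ⊤) :
    (∃ x : β → EReal, (∀ k, x k ≠ ⊤) ∧ eMulVec D x = c) ↔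
      eMulVec D (eMinMulVec (econj D) c) = c := by
  rw [exists_ne_top_eMulVec_eq_iff D hc, eq_comm, ← (gc_eMulVec_eMinMulVec_econj D).exists_eq_l]
  simp only [eq_comm]

end Residuation

section Vectorization

variable {ι α β γ δ : Type*} [Fintype ι] [Fintype β] [Fintype γ]

theorem eMulVec_iSup (M : ι → Matrix α β EReal) (x : β → EReal) :
    eMulVec (fun u v => ⨆ t, M t u v) x = fun u => ⨆ t, eMulVec (M t) x u := by
  funext u
  simp only [eMulVec, EReal.iSup_add_of_finite]
  exact iSup_comm

theorem eMulVec_eTensor_transpose_eVec (A : Matrix α β EReal) (B : Matrix γ δ EReal)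
    (X : Matrix β γ EReal) :
    eMulVec (eTensor A B.transpose) (eVec X) = eVec (eMul A (eMul X B)) := by
  funext ⟨l, i⟩
  simp only [eMulVec, eTensor, eVec, eMul, Matrix.transpose_apply, iSup_prod,
    EReal.add_iSup_of_finite]
  rw [iSup_comm]
  refine iSup_congr fun j => iSup_congr fun k => ?_
  ac_rfl

end Vectorization

theorem eVec_injective {α β : Type*} :
    Function.Injective (eVec : Matrix α β EReal → β × α → EReal) :=
  fun _ _ h => funext fun i => funext fun j => congrFun h (j, i)

theorem matrix_equation_solvable_iff_general (r m n p q : ℕ)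
    (A : Fin r → Matrix (Fin m) (Fin n) EReal)
    (B : Fin r → Matrix (Fin p) (Fin q) EReal)
    (C : Matrix (Fin m) (Fin q) EReal)
    (hC : ∀ i j, C i j ≠ ⊤) :
    (∃ X : Matrix (Fin n) (Fin p) EReal, (∀ i j, X i j ≠ ⊤) ∧
        (fun i j => ⨆ t, eMul (A t) (eMul X (B t)) i j) = C) ↔
      eMulVec (fun u v => ⨆ t, eTensor (A t) (B t).transpose u v)
          (eMinMulVec (econj (fun u v => ⨆ t, eTensor (A t) (B t).transpose u v)) (eVec C))
        = eVec C := by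
  set D : Matrix (Fin q × Fin m) (Fin p × Fin n) EReal :=
    fun u v => ⨆ t, eTensor (A t) (B t).transpose u v
  have hvec : ∀ X, eMulVec D (eVec X) = eVec fun i j => ⨆ t, eMul (A t) (eMul X (B t)) i j := by
    intro X
    simp only [D, eMulVec_iSup, eMulVec_eTensor_transpose_eVec]
    rfl
  have hc : ∀ u, eVec C u ≠ ⊤ := fun u => hC u.2 u.1
  rw [← exists_ne_top_eMulVec_eq_iff_eMulVec_eMinMulVec_eq D hc]
  constructor
  · rintro ⟨X, hX, rfl⟩
    exact ⟨eVec X, fun k => hX _ _, hvec X⟩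
  · rintro ⟨x, hx, hDx⟩
    exact ⟨fun j k => x (k, j), fun j k => hx (k, j), eVec_injective ((hvec _).symm.trans hDx)⟩

/-- With `D = A₁ ⊠ B₁ᵀ ⊕ ⋯ ⊕ A_r ⊠ B_rᵀ`, the equation
`A₁ ⊗ X ⊗ B₁ ⊕ ⋯ ⊕ A_r ⊗ X ⊗ B_r = C` has a solution `X` over `R̄` if and only if
`D ⊗ (D^# ⊗' vec C) = vec C`. -/
theorem matrix_equation_solvable_iff (r m n p q : ℕ)
    (A : Fin r → Matrix (Fin m) (Fin n) EReal)
    (B : Fin r → Matrix (Fin p) (Fin q) EReal)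
    (C : Matrix (Fin m) (Fin q) EReal)
    (hA : ∀ t i j, A t i j ≠ ⊤) (hB : ∀ t i j, B t i j ≠ ⊤)
    (hC : ∀ i j, C i j ≠ ⊤) :
    (∃ X : Matrix (Fin n) (Fin p) EReal, (∀ i j, X i j ≠ ⊤) ∧
        (fun i j => ⨆ t, eMul (A t) (eMul X (B t)) i j) = C) ↔
      eMulVec (fun u v => ⨆ t, eTensor (A t) (B t).transpose u v)
          (eMinMulVec (econj (fun u v => ⨆ t, eTensor (A t) (B t).transpose u v)) (eVec C))
        = eVec C :=
  matrix_equation_solvable_iff_general r m n p q A B C hC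
end

section
/- If P and Q are diagonal matrices of order n (with finite diagonal entries) and A is an n×n matrix over the max-plus semiring, then maper(A⊠Q) = n·maper(A) + n·maper(Q) and maper(P⊠A) = n·maper(P) + n·maper(A). -/
/-! A permutation with finite weight in a block-diagonal matrix must map each block to itself,
so the tropical permanent of a block-diagonal matrix is the tropical product of the permanents
of its blocks. `A ⊠ diag d` is block diagonal with blocks `A ⊗ d k`, and adding a constant `c`
to every entry of `A` adds `n·c` to its permanent; `diag d ⊠ A` is `A ⊠ diag d` with the two
factors of the index set swapped. -/

open Finset

section
variable {ι α : Type*} [Fintype ι] [DecidableEq ι] [Fintype α] [DecidableEq α]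

lemma sum_le_maper (B : Matrix α α MP) (σ : Equiv.Perm α) : ∑ i, B i (σ i) ≤ maper B :=
  le_sup (f := fun π : Equiv.Perm α => ∑ i, B i (π i)) (mem_univ σ)

lemma sum_le_maper_of_injective (B : Matrix α α MP) {τ : α → α} (hτ : τ.Injective) :
    ∑ i, B i (τ i) ≤ maper B :=
  sum_le_maper B (Equiv.ofBijective τ hτ.bijective_of_finite)

lemma exists_perm_sum_eq_maper (B : Matrix α α MP) :
    ∃ σ : Equiv.Perm α, ∑ i, B i (σ i) = maper B :=
  let ⟨σ, _, hσ⟩ := exists_mem_eq_sup univ univ_nonempty fun π : Equiv.Perm α => ∑ i, B i (π i)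
  ⟨σ, hσ.symm⟩

lemma maper_add_const (B : Matrix α α MP) (c : MP) :
    maper (fun i j => B i j + c) = maper B + Fintype.card α • c := by
  have hmono : Monotone fun x : MP => x + Fintype.card α • c := fun _ _ h => add_le_add_left h _
  simp only [maper, apply_sup_eq_sup_comp_of_nonempty hmono univ_nonempty, Function.comp_def,
    sum_add_distrib, sum_const, card_univ]

lemma maper_mpDiag (d : α → ℝ) : maper (mpDiag d) = ∑ i, (d i : MP) := by
  refine le_antisymm (Finset.sup_le fun π _ => ?_) ?_
  · by_cases hπ : π = 1
    · simp [hπ, mpDiag]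
    · obtain ⟨i, hi⟩ : ∃ i, π i ≠ i := by simpa [Equiv.ext_iff] using hπ
      have hbot : ∑ j, mpDiag d j (π j) = ⊥ :=
        WithBot.sum_eq_bot_iff.2 ⟨i, mem_univ i, if_neg hi.symm⟩
      simp [hbot]
  · simpa [mpDiag] using sum_le_maper (mpDiag d) 1

lemma maper_submatrix {β : Type*} [Fintype β] [DecidableEq β] (A : Matrix α α MP) (e : β ≃ α) :
    maper (A.submatrix e e) = maper A := by
  rw [maper, maper, ← univ_map_equiv_to_embedding (Equiv.permCongr e), sup_map]
  congr 1; funext π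
  rw [Function.comp_apply, ← Equiv.sum_comp e]
  simp [Equiv.permCongr_apply]

lemma maper_eq_sum_maper_of_blockDiagonal (M : Matrix (ι × α) (ι × α) MP)
    (hM : ∀ p q, p.1 ≠ q.1 → M p q = ⊥) :
    maper M = ∑ k, maper fun i j => M (k, i) (k, j) := by
  refine le_antisymm (Finset.sup_le fun π _ => ?_) ?_
  · by_cases hπ : ∀ p, (π p).1 = p.1
    · have hinj (k : ι) : Function.Injective fun i => (π (k, i)).2 := fun i i' h =>
        (Prod.ext_iff.1 (π.injective (Prod.ext (by rw [hπ, hπ]) h))).2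
      calc ∑ p, M p (π p) = ∑ k, ∑ i, M (k, i) (k, (π (k, i)).2) := by
            rw [Fintype.sum_prod_type]
            refine sum_congr rfl fun k _ => sum_congr rfl fun i _ => ?_
            exact congrArg (M (k, i)) (Prod.ext (hπ (k, i)) rfl)
        _ ≤ _ := sum_le_sum fun k _ =>
          sum_le_maper_of_injective (fun i j => M (k, i) (k, j)) (hinj k)
    · obtain ⟨p, hp⟩ := not_forall.1 hπ
      have hbot : ∑ p, M p (π p) = ⊥ :=
        WithBot.sum_eq_bot_iff.2 ⟨p, mem_univ p, hM p (π p) (Ne.symm hp)⟩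
      exact hbot ▸ bot_le
  · choose σ hσ using fun k => exists_perm_sum_eq_maper fun i j => M (k, i) (k, j)
    calc ∑ k, maper (fun i j => M (k, i) (k, j))
        = ∑ p, M p (Equiv.prodShear (Equiv.refl ι) σ p) := by
          simp [← hσ, Fintype.sum_prod_type]
      _ ≤ maper M := sum_le_maper M _

lemma maper_mpTensor_mpDiag (A : Matrix α α MP) (d : ι → ℝ) :
    maper (mpTensor A (mpDiag d)) =
      Fintype.card ι • maper A + Fintype.card α • maper (mpDiag d) := by
  have hblock : ∀ p q : ι × α, p.1 ≠ q.1 → mpTensor A (mpDiag d) p q = ⊥ := fun p q h => by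
    simp [mpTensor, mpDiag, h]
  rw [maper_eq_sum_maper_of_blockDiagonal _ hblock, maper_mpDiag, smul_sum]
  simp [mpTensor, mpDiag, maper_add_const, sum_add_distrib]

lemma maper_mpDiag_mpTensor (A : Matrix α α MP) (d : ι → ℝ) :
    maper (mpTensor (mpDiag d) A) =
      Fintype.card α • maper (mpDiag d) + Fintype.card ι • maper A := by
  have : mpTensor (mpDiag d) A =
      (mpTensor A (mpDiag d)).submatrix (Equiv.prodComm α ι) (Equiv.prodComm α ι) := by
    ext p q
    exact add_comm _ _
  rw [this, maper_submatrix, maper_mpTensor_mpDiag, add_comm]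

end

/-- For diagonal `P, Q` of order `n` (finite diagonal entries) and an
`n × n` matrix `A`, `maper (A ⊠ Q) = n • maper A + n • maper Q` and
`maper (P ⊠ A) = n • maper P + n • maper A`. -/
theorem maper_tensor_diag (n : ℕ) (p q : Fin n → ℝ) (A : Matrix (Fin n) (Fin n) MP) :
    maper (mpTensor A (mpDiag q)) = n • maper A + n • maper (mpDiag q) ∧
    maper (mpTensor (mpDiag p) A) = n • maper (mpDiag p) + n • maper A := by
  have h₁ := maper_mpTensor_mpDiag A q
  have h₂ := maper_mpDiag_mpTensor A p
  rw [Fintype.card_fin] at h₁ h₂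
  exact ⟨h₁, h₂⟩
end

section
/- Let A be an n×n matrix and B an m×m matrix over the max-plus semiring such that maper(A) and maper(B) are finite. Then maper(A⊠B) = m·maper(A) + n·maper(B) (tropically, (maper(A))^m ⊗ (maper(B))^n). -/
open Finset

/-- Group a sum along the fibers of `g`. -/
lemma group_sum {M : Type*} [AddCommMonoid M] {n m : ℕ} (g : Fin m → Fin n) (h : Fin n → M) :
    ∑ k, h (g k) = ∑ j, ({k ∈ (univ : Finset (Fin m)) | g k = j}).card • h j := by
  rw [← Finset.sum_fiberwise univ g (fun k => h (g k))]
  refine Finset.sum_congr rfl fun j _ => ?_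
  rw [Finset.sum_congr rfl (fun k hk => by rw [(Finset.mem_filter.1 hk).2]), Finset.sum_const]

lemma fiber_card_sum {n m : ℕ} (g : Fin m → Fin n) :
    ∑ j, ({k ∈ (univ : Finset (Fin m)) | g k = j}).card = m := by
  have := group_sum g (fun _ => (1 : ℕ))
  simpa using this.symm

lemma sum_count_le {n : ℕ} (A : Matrix (Fin n) (Fin n) MP) :
    ∀ (m : ℕ) (C : Fin n → Fin n → ℕ),
      (∀ i, ∑ j, C i j = m) → (∀ j, ∑ i, C i j = m) →
      (∑ i, ∑ j, C i j • A i j) ≤ m • maper A := by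
  intro m
  induction m with
  | zero =>
    intro C hrow _
    have hz : ∀ i j, C i j = 0 := fun i j =>
      (Finset.sum_eq_zero_iff.1 (hrow i)) j (mem_univ j)
    simp [hz]
  | succ m ih =>
    intro C hrow hcol
    set t : Fin n → Finset (Fin n) := fun i => {j ∈ univ | 0 < C i j} with ht
    have hall : ∀ s : Finset (Fin n), s.card ≤ (s.biUnion t).card := by
      intro s
      have h1 : ∑ i ∈ s, ∑ j, C i j = (m + 1) * s.card := by
        rw [Finset.sum_congr rfl fun i _ => hrow i, Finset.sum_const, smul_eq_mul, mul_comm]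
      have h2 : ∀ i ∈ s, ∑ j, C i j ≤ ∑ j ∈ s.biUnion t, C i j := by
        intro i hi
        have hsub : t i ⊆ s.biUnion t := Finset.subset_biUnion_of_mem t hi
        have he : ∑ j ∈ t i, C i j = ∑ j, C i j := by
          rw [ht]
          exact Finset.sum_filter_of_ne fun j _ hj => Nat.pos_of_ne_zero hj
        rw [← he]
        exact Finset.sum_le_sum_of_subset hsub
      have h3 : ∑ i ∈ s, ∑ j, C i j ≤ (s.biUnion t).card * (m + 1) := by
        calc ∑ i ∈ s, ∑ j, C i j ≤ ∑ i ∈ s, ∑ j ∈ s.biUnion t, C i j := Finset.sum_le_sum h2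
          _ = ∑ j ∈ s.biUnion t, ∑ i ∈ s, C i j := Finset.sum_comm
          _ ≤ ∑ j ∈ s.biUnion t, ∑ i, C i j :=
              Finset.sum_le_sum fun j _ => Finset.sum_le_sum_of_subset (Finset.subset_univ s)
          _ = ∑ j ∈ s.biUnion t, (m + 1) := Finset.sum_congr rfl fun j _ => hcol j
          _ = (s.biUnion t).card * (m + 1) := by rw [Finset.sum_const, smul_eq_mul]
      have h4 : (m + 1) * s.card ≤ (m + 1) * (s.biUnion t).card := by
        rw [← h1]; rw [mul_comm (m+1)] at *; exact h3
      exact Nat.le_of_mul_le_mul_left h4 (Nat.succ_pos m)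
    obtain ⟨f, hfinj, hf⟩ := (Finset.all_card_le_biUnion_card_iff_existsInjective' t).1 hall
    have hfb : Function.Bijective f := Finite.injective_iff_bijective.1 hfinj
    set π : Equiv.Perm (Fin n) := Equiv.ofBijective f hfb with hπdef
    have hπ : ∀ i, 0 < C i (π i) := fun i => (Finset.mem_filter.1 (hf i)).2
    set C' : Fin n → Fin n → ℕ := fun i j => if j = π i then C i j - 1 else C i j with hC'
    have hCdec : ∀ i, C i (π i) = C' i (π i) + 1 := by
      intro i; have := hπ i; simp only [hC', if_pos rfl]; omega
    have hrow' : ∀ i, ∑ j, C' i j = m := by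
      intro i
      have e1 : ∑ j, C i j = C i (π i) + ∑ j ∈ univ.erase (π i), C i j :=
        (Finset.add_sum_erase univ _ (mem_univ _)).symm
      have e2 : ∑ j, C' i j = C' i (π i) + ∑ j ∈ univ.erase (π i), C' i j :=
        (Finset.add_sum_erase univ _ (mem_univ _)).symm
      have e3 : ∑ j ∈ univ.erase (π i), C' i j = ∑ j ∈ univ.erase (π i), C i j := by
        refine Finset.sum_congr rfl fun j hj => ?_
        simp [hC', (Finset.mem_erase.1 hj).1]
      have h := hrow i
      have h2 := hCdec i
      omega
    have hcol' : ∀ j, ∑ i, C' i j = m := by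
      intro j
      set i0 := π.symm j with hi0
      have hji : j = π i0 := (Equiv.apply_symm_apply π j).symm
      have e1 : ∑ i, C i j = C i0 j + ∑ i ∈ univ.erase i0, C i j :=
        (Finset.add_sum_erase univ _ (mem_univ _)).symm
      have e2 : ∑ i, C' i j = C' i0 j + ∑ i ∈ univ.erase i0, C' i j :=
        (Finset.add_sum_erase univ _ (mem_univ _)).symm
      have e3 : ∑ i ∈ univ.erase i0, C' i j = ∑ i ∈ univ.erase i0, C i j := by
        refine Finset.sum_congr rfl fun i hi => ?_
        have hne : i ≠ i0 := (Finset.mem_erase.1 hi).1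
        have hne2 : j ≠ π i := by
          intro h; exact hne (by rw [hi0, h, Equiv.symm_apply_apply])
        simp [hC', hne2]
      have e4 : C i0 j = C' i0 j + 1 := by rw [hji]; exact hCdec i0
      have h := hcol j
      omega
    have hsplit : ∑ i, ∑ j, C i j • A i j
        = (∑ i, ∑ j, C' i j • A i j) + ∑ i, A i (π i) := by
      rw [← Finset.sum_add_distrib]
      refine Finset.sum_congr rfl fun i _ => ?_
      have e1 : ∑ j, C i j • A i j
          = C i (π i) • A i (π i) + ∑ j ∈ univ.erase (π i), C i j • A i j :=
        (Finset.add_sum_erase univ _ (mem_univ _)).symm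
      have e2 : ∑ j, C' i j • A i j
          = C' i (π i) • A i (π i) + ∑ j ∈ univ.erase (π i), C' i j • A i j :=
        (Finset.add_sum_erase univ _ (mem_univ _)).symm
      have e3 : ∑ j ∈ univ.erase (π i), C' i j • A i j
          = ∑ j ∈ univ.erase (π i), C i j • A i j := by
        refine Finset.sum_congr rfl fun j hj => ?_
        simp [hC', (Finset.mem_erase.1 hj).1]
      rw [e1, e2, e3, hCdec i, succ_nsmul]
      abel
    rw [hsplit]
    have h1 : (∑ i, ∑ j, C' i j • A i j) ≤ m • maper A := ih C' hrow' hcol'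
    have h2 : (∑ i, A i (π i)) ≤ maper A := by
      rw [maper]
      exact Finset.le_sup (f := fun π : Equiv.Perm (Fin n) => ∑ i, A i (π i)) (Finset.mem_univ π)
    calc (∑ i, ∑ j, C' i j • A i j) + ∑ i, A i (π i)
        ≤ m • maper A + maper A := add_le_add h1 h2
      _ = (m + 1) • maper A := (succ_nsmul _ _).symm

/-- For an `n × n` matrix `A` and an `m × m` matrix `B` with finite
tropical permanents, `maper (A ⊠ B) = m • maper A + n • maper B`
(tropically, `(maper A)^m ⊗ (maper B)^n`). -/
theorem maper_tensor (n m : ℕ)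
    (A : Matrix (Fin n) (Fin n) MP) (B : Matrix (Fin m) (Fin m) MP)
    (hA : maper A ≠ ⊥) (hB : maper B ≠ ⊥) :
    maper (mpTensor A B) = m • maper A + n • maper B := by
  apply le_antisymm
  · rw [maper]
    apply Finset.sup_le
    intro σ _
    have hsum : ∑ p : Fin m × Fin n, mpTensor A B p (σ p)
        = (∑ p : Fin m × Fin n, A p.2 (σ p).2) + ∑ p : Fin m × Fin n, B p.1 (σ p).1 := by
      rw [← Finset.sum_add_distrib]; rfl
    rw [hsum]
    set CA : Fin n → Fin n → ℕ :=
      fun i j => ({k ∈ (univ : Finset (Fin m)) | (σ (k, i)).2 = j}).card with hCA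
    set DB : Fin m → Fin m → ℕ :=
      fun k l => ({i ∈ (univ : Finset (Fin n)) | (σ (k, i)).1 = l}).card with hDB
    have hA1 : (∑ p : Fin m × Fin n, A p.2 (σ p).2) = ∑ i, ∑ j, CA i j • A i j := by
      rw [Fintype.sum_prod_type, Finset.sum_comm]
      exact Finset.sum_congr rfl fun i _ => group_sum (fun k => (σ (k, i)).2) (A i)
    have hB1 : (∑ p : Fin m × Fin n, B p.1 (σ p).1) = ∑ k, ∑ l, DB k l • B k l := by
      rw [Fintype.sum_prod_type]
      exact Finset.sum_congr rfl fun k _ => group_sum (fun i => (σ (k, i)).1) (B k)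
    have hrowA : ∀ i, ∑ j, CA i j = m := fun i => fiber_card_sum (fun k => (σ (k, i)).2)
    have hrowB : ∀ k, ∑ l, DB k l = n := fun k => fiber_card_sum (fun i => (σ (k, i)).1)
    have hcolA : ∀ j, ∑ i, CA i j = m := by
      intro j
      have e1 : ∑ i, CA i j = ∑ p : Fin m × Fin n, (if (σ p).2 = j then 1 else 0) := by
        rw [Fintype.sum_prod_type, Finset.sum_comm]
        exact Finset.sum_congr rfl fun i _ => Finset.card_filter _ _
      have e2 : ∑ p : Fin m × Fin n, (if (σ p).2 = j then 1 else 0)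
          = ∑ q : Fin m × Fin n, (if q.2 = j then 1 else 0) :=
        Equiv.sum_comp σ (fun q => if q.2 = j then 1 else 0)
      rw [e1, e2, Fintype.sum_prod_type,
        Finset.sum_congr rfl fun k _ => Finset.sum_ite_eq' univ j (fun _ => (1 : ℕ))]
      simp
    have hcolB : ∀ l, ∑ k, DB k l = n := by
      intro l
      have e1 : ∑ k, DB k l = ∑ p : Fin m × Fin n, (if (σ p).1 = l then 1 else 0) := by
        rw [Fintype.sum_prod_type]
        exact Finset.sum_congr rfl fun k _ => Finset.card_filter _ _
      have e2 : ∑ p : Fin m × Fin n, (if (σ p).1 = l then 1 else 0)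
          = ∑ q : Fin m × Fin n, (if q.1 = l then 1 else 0) :=
        Equiv.sum_comp σ (fun q => if q.1 = l then 1 else 0)
      rw [e1, e2, Fintype.sum_prod_type_right,
        Finset.sum_congr rfl fun i _ => Finset.sum_ite_eq' univ l (fun _ => (1 : ℕ))]
      simp
    rw [hA1, hB1]
    exact add_le_add (sum_count_le A m CA hrowA hcolA) (sum_count_le B n DB hrowB hcolB)
  · obtain ⟨π, -, hπ⟩ := Finset.exists_mem_eq_sup (univ : Finset (Equiv.Perm (Fin n)))
      Finset.univ_nonempty (fun π => ∑ i, A i (π i))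
    obtain ⟨ρ, -, hρ⟩ := Finset.exists_mem_eq_sup (univ : Finset (Equiv.Perm (Fin m)))
      Finset.univ_nonempty (fun ρ => ∑ k, B k (ρ k))
    have hmA : maper A = ∑ i, A i (π i) := hπ
    have hmB : maper B = ∑ k, B k (ρ k) := hρ
    have key : ∑ p : Fin m × Fin n, mpTensor A B p ((Equiv.prodCongr ρ π) p)
        = m • (∑ i, A i (π i)) + n • (∑ k, B k (ρ k)) := by
      rw [Fintype.sum_prod_type]
      have inner : ∀ k : Fin m, ∑ i, mpTensor A B (k, i) ((Equiv.prodCongr ρ π) (k, i))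
          = (∑ i, A i (π i)) + n • B k (ρ k) := by
        intro k
        have : ∀ i : Fin n, mpTensor A B (k, i) ((Equiv.prodCongr ρ π) (k, i))
            = A i (π i) + B k (ρ k) := fun i => rfl
        rw [Finset.sum_congr rfl fun i _ => this i, Finset.sum_add_distrib,
          Finset.sum_const, Finset.card_univ, Fintype.card_fin]
      rw [Finset.sum_congr rfl fun k _ => inner k, Finset.sum_add_distrib,
        Finset.sum_const, Finset.card_univ, Fintype.card_fin, ← Finset.smul_sum]
    rw [hmA, hmB, ← key, maper]
    exact Finset.le_sup (f := fun σ : Equiv.Perm (Fin m × Fin n) =>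
      ∑ p, mpTensor A B p (σ p)) (Finset.mem_univ _)
end

section
/- A square matrix A over the max-plus semiring is invertible (there exists B with A⊗B = B⊗A = I) if and only if A is a generalized permutation matrix, i.e., there is a permutation π of {1,...,n} such that a_{i,π(i)} ∈ ℝ for all i and all other entries of A equal ε. -/
private lemma sup_eq_single {α : Type*} [Fintype α] (f : α → MP) (k0 : α)
    (h : ∀ k, k ≠ k0 → f k = ⊥) : Finset.univ.sup f = f k0 := by
  apply le_antisymm
  · refine Finset.sup_le fun k _ => ?_
    by_cases hk : k = k0
    · subst hk; exact le_rfl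
    · rw [h k hk]; exact bot_le
  · exact Finset.le_sup (Finset.mem_univ k0)

/-- A square max-plus matrix is invertible if and only if it is a
generalized permutation matrix: for some permutation `π`, `A i (π i)` is finite for all `i`
and all other entries are `ε`. -/
theorem invertible_iff_generalized_permutation (n : ℕ) (A : Matrix (Fin n) (Fin n) MP) :
    (∃ B : Matrix (Fin n) (Fin n) MP,
        mpMul A B = mpUnit (Fin n) ∧ mpMul B A = mpUnit (Fin n)) ↔
      ∃ π : Equiv.Perm (Fin n),
        (∀ i, A i (π i) ≠ ⊥) ∧ ∀ i j, j ≠ π i → A i j = ⊥ := by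
  constructor
  · rintro ⟨B, hAB, hBA⟩
    -- for each i there is k with A i k + B k i = 0
    have hex : ∀ i : Fin n, ∃ k, A i k + B k i = 0 := by
      intro i
      have hdiag : Finset.univ.sup (fun k => A i k + B k i) = 0 := by
        have := congrFun (congrFun hAB i) i
        simpa [mpMul, mpUnit] using this
      obtain ⟨k, -, hk⟩ := Finset.exists_mem_eq_sup (α := MP) (Finset.univ : Finset (Fin n))
        ⟨i, Finset.mem_univ i⟩ (fun k => A i k + B k i)
      exact ⟨k, by rw [← hk, hdiag]⟩
    set σ : Fin n → Fin n := fun i => Classical.choose (hex i) with hσ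
    have hσspec : ∀ i, A i (σ i) + B (σ i) i = 0 := fun i => Classical.choose_spec (hex i)
    have hAfin : ∀ i, A i (σ i) ≠ ⊥ := by
      intro i hbot
      have := hσspec i
      rw [hbot] at this
      simp at this
    have hBfin : ∀ i, B (σ i) i ≠ ⊥ := by
      intro i hbot
      have := hσspec i
      rw [hbot] at this
      simp at this
    -- off-diagonal entries of AB are ⊥
    have hoff : ∀ i j, i ≠ j → ∀ k, A i k + B k j = ⊥ := by
      intro i j hij k
      have hsup : Finset.univ.sup (fun k => A i k + B k j) = ⊥ := by
        have := congrFun (congrFun hAB i) j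
        simpa [mpMul, mpUnit, hij] using this
      have hle : A i k + B k j ≤ ⊥ := by
        rw [← hsup]; exact Finset.le_sup (f := fun k => A i k + B k j) (Finset.mem_univ k)
      exact le_bot_iff.mp hle
    have hinj : Function.Injective σ := by
      intro i j hij
      by_contra hne
      have := hoff i j hne (σ i)
      rcases WithBot.add_eq_bot.mp this with h | h
      · exact hAfin i h
      · rw [hij] at h; exact hBfin j h
    refine ⟨Equiv.ofBijective σ (Finite.injective_iff_bijective.mp hinj), ?_, ?_⟩
    · intro i; exact hAfin i
    · intro i j hj
      simp only [Equiv.ofBijective_apply] at hj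
      set i' := (Equiv.ofBijective σ (Finite.injective_iff_bijective.mp hinj)).symm j with hi'
      have hσi' : σ i' = j :=
        Equiv.apply_symm_apply (Equiv.ofBijective σ (Finite.injective_iff_bijective.mp hinj)) j
      have hii' : i ≠ i' := by
        intro h; apply hj; rw [h, hσi']
      have := hoff i i' hii' j
      rcases WithBot.add_eq_bot.mp this with h | h
      · exact h
      · exact absurd h (by rw [← hσi'] at h ⊢; exact hBfin i')
  · rintro ⟨π, h1, h2⟩
    have hex : ∀ i, ∃ r : ℝ, A i (π i) = (r : MP) := by
      intro i
      obtain ⟨r, hr⟩ := WithBot.ne_bot_iff_exists.mp (h1 i)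
      exact ⟨r, hr.symm⟩
    choose a ha using hex
    refine ⟨fun k j => if k = π j then ((-a j : ℝ) : MP) else ⊥, ?_, ?_⟩
    · funext i j
      have hs : (mpMul A (fun k j => if k = π j then ((-a j : ℝ) : MP) else ⊥)) i j
          = A i (π i) + (if π i = π j then ((-a j : ℝ) : MP) else ⊥) := by
        apply sup_eq_single
        intro k hk
        rw [h2 i k (by simpa using hk)]
        simp
      rw [hs, ha i]
      by_cases hij : i = j
      · subst hij
        simp [mpUnit, ← WithBot.coe_add]
      · rw [if_neg (fun h => hij (π.injective h))]
        simp [mpUnit, hij]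
    · funext k l
      have hs : (mpMul (fun k j => if k = π j then ((-a j : ℝ) : MP) else ⊥) A) k l
          = (if k = π (π.symm k) then ((-a (π.symm k) : ℝ) : MP) else ⊥) + A (π.symm k) l := by
        apply sup_eq_single
        intro j hj
        have : k ≠ π j := by
          intro h; apply hj; rw [h, Equiv.symm_apply_apply]
        simp [this]
      rw [hs, if_pos (Equiv.apply_symm_apply π k).symm]
      by_cases hkl : k = l
      · subst hkl
        have hA := ha (π.symm k)
        rw [Equiv.apply_symm_apply] at hA
        rw [hA]
        simp [mpUnit, ← WithBot.coe_add]
      · have hne : l ≠ π (π.symm k) := by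
          rw [Equiv.apply_symm_apply]; exact fun h => hkl h.symm
        rw [h2 (π.symm k) l hne]
        simp [mpUnit, hkl]
end

section
/- In the proof of the tropical permanent tensor-product formula: let C be an n×n matrix and D an m×m matrix over the max-plus semiring with all entries ≤ 0 and maper(C) = maper(D) = 0. Then maper(C⊠D) = 0; moreover, if π and σ are permutations with c_{j,π(j)} = 0 for all j and d_{k,σ(k)} = 0 for all k, then the permutation τ of {1,...,nm} defined by τ(kn+j) = (σ(k+1)-1)n + π(j) for 0 ≤ k ≤ m-1, 1 ≤ j ≤ n, satisfies (C⊠D)_{i,τ(i)} = 0 for all i. -/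
/-- If all entries of `C` (n × n) and `D` (m × m) are `≤ 0`,
`maper C = maper D = 0`, and `π`, `σ` are permutations with `C j (π j) = 0` and
`D k (σ k) = 0` for all `j, k`, then `maper (C ⊠ D) = 0` and the permutation
`τ = (k, j) ↦ (σ k, π j)` of the `n·m` block indices (i.e.
`τ(kn + j) = (σ(k+1) - 1)n + π(j)`) picks only zero entries of `C ⊠ D`. -/
theorem maper_tensor_zero (n m : ℕ)
    (C : Matrix (Fin n) (Fin n) MP) (D : Matrix (Fin m) (Fin m) MP)
    (hC0 : ∀ i j, C i j ≤ 0) (hD0 : ∀ i j, D i j ≤ 0)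
    (hC : maper C = 0) (hD : maper D = 0)
    (π : Equiv.Perm (Fin n)) (σ : Equiv.Perm (Fin m))
    (hπ : ∀ j, C j (π j) = 0) (hσ : ∀ k, D k (σ k) = 0) :
    maper (mpTensor C D) = 0 ∧
      ∀ p : Fin m × Fin n, mpTensor C D p (σ p.1, π p.2) = 0 := by
  have hzero : ∀ p : Fin m × Fin n, mpTensor C D p (σ p.1, π p.2) = 0 := by
    intro p
    simp [mpTensor, hπ p.2, hσ p.1]
  refine ⟨le_antisymm ?_ ?_, hzero⟩
  · apply Finset.sup_le
    intro τ _
    apply Finset.sum_nonpos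
    intro p _
    have h1 := hC0 p.2 (τ p).2
    have h2 := hD0 p.1 (τ p).1
    calc mpTensor C D p (τ p) = C p.2 (τ p).2 + D p.1 (τ p).1 := rfl
      _ ≤ 0 + 0 := add_le_add h1 h2
      _ = 0 := by simp
  · have h : (∑ p : Fin m × Fin n, mpTensor C D p ((σ.prodCongr π) p)) = 0 := by
      have hz : ∀ p : Fin m × Fin n, mpTensor C D p ((σ.prodCongr π) p) = 0 := by
        intro p; simpa [Equiv.prodCongr_apply, Prod.map] using hzero p
      rw [Finset.sum_congr rfl fun p _ => hz p]; simp
    have h2 : (∑ p : Fin m × Fin n, mpTensor C D p ((σ.prodCongr π) p))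
        ≤ maper (mpTensor C D) :=
      Finset.le_sup (f := fun τ : Equiv.Perm (Fin m × Fin n) =>
        ∑ p, mpTensor C D p (τ p)) (Finset.mem_univ (σ.prodCongr π))
    exact h ▸ h2
end
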